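/- arXiv:1808.08320 — 4 statements merged into one kernel-verified Lean document; each statement's English description precedes it below -/
import Mathlib

section
/- Let K_1, ..., K_n be i.i.d. random variables, A a Borel set, I_i = 1_{K_i ∈ A}, r̂ = (1/n)Σ_{i=1}^n I_i and r = E[I_1] = Prob(K_1 ∈ A). Then for every m ≥ 2 there exists a constant C_m (depending only on m) such that ‖r̂ − r‖_m ≤ C_m (r(1−r))^{1/m} / √n, where ‖·‖_m denotes the L^m norm. -/
open MeasureTheory ProbabilityTheory Filter Finset

private lemma aux_integrable {Ω : Type} [MeasurableSpace Ω] {μ : Measure Ω}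
    [IsProbabilityMeasure μ] {f : Ω → ℝ} (hf : Measurable f) {C : ℝ}
    (h : ∀ ω, |f ω| ≤ C) : Integrable f μ :=
  (integrable_const C).mono' hf.aestronglyMeasurable
    (Filter.Eventually.of_forall (by simpa [Real.norm_eq_abs] using h))

private lemma aux_integral_prod {Ω : Type} [MeasurableSpace Ω] {μ : Measure Ω}
    [IsProbabilityMeasure μ] {ι : Type*} {Y : ι → Ω → ℝ}
    (h : iIndepFun Y μ)
    (hm : ∀ i, Measurable (Y i)) (s : Finset ι) :
    ∫ ω, ∏ i ∈ s, Y i ω ∂μ = ∏ i ∈ s, ∫ ω, Y i ω ∂μ := by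
  classical
  induction s using Finset.induction_on with
  | empty => simp
  | @insert a s ha ih =>
    have hprodmeas : Measurable fun ω => ∏ i ∈ s, Y i ω :=
      Finset.measurable_prod _ (fun i _ => hm i)
    have hIndep : IndepFun (Y a) (fun ω => ∏ i ∈ s, Y i ω) μ := by
      have h2 := (h.indepFun_finsetProd_of_notMem hm ha).symm
      have : (∏ j ∈ s, Y j) = fun ω => ∏ i ∈ s, Y i ω := by
        funext ω; simp [Finset.prod_apply]
      rwa [this] at h2
    have hmul := hIndep.integral_mul_eq_mul_integral (hm a).aestronglyMeasurable
      hprodmeas.aestronglyMeasurable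
    simp only [Finset.prod_insert ha]
    calc ∫ ω, Y a ω * ∏ i ∈ s, Y i ω ∂μ
        = ∫ ω, (Y a * fun ω => ∏ i ∈ s, Y i ω) ω ∂μ := by simp [Pi.mul_apply]
      _ = (∫ ω, Y a ω ∂μ) * ∫ ω, ∏ i ∈ s, Y i ω ∂μ := hmul
      _ = (∫ ω, Y a ω ∂μ) * ∏ i ∈ s, ∫ ω, Y i ω ∂μ := by rw [ih]

private lemma aux_moment {Ω : Type} [MeasurableSpace Ω] {μ : Measure Ω}
    [IsProbabilityMeasure μ] {n : ℕ} (hn : 1 ≤ n) {X : Fin n → Ω → ℝ}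
    (hm : ∀ i, Measurable (X i))
    (h : iIndepFun X μ)
    {σ2 : ℝ} (hσ0 : 0 ≤ σ2) (hσ1 : σ2 ≤ 1)
    (hb : ∀ i ω, |X i ω| ≤ 1)
    (hzero : ∀ i, ∫ ω, X i ω ∂μ = 0)
    (hmom : ∀ i (a : ℕ), 2 ≤ a → |∫ ω, X i ω ^ a ∂μ| ≤ σ2)
    (k : ℕ) (hk : 1 ≤ k) :
    ∫ ω, (∑ i, X i ω) ^ (2 * k) ∂μ
      ≤ ((k : ℝ) + 1) * ((n : ℝ) ^ k * ((k : ℝ) ^ (2 * k) * σ2)) := by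
  classical
  set N := 2 * k with hN
  have hN1 : 1 ≤ N := by omega
  -- expansion
  have expand : ∀ ω, (∑ i, X i ω) ^ N = ∑ p : Fin N → Fin n, ∏ t, X (p t) ω := by
    intro ω
    have := Finset.prod_univ_sum (fun _ : Fin N => (Finset.univ : Finset (Fin n)))
      (fun _ j => X j ω)
    simpa [Finset.prod_const, Fintype.piFinset_univ] using this
  have hmeas_term : ∀ p : Fin N → Fin n, Measurable fun ω => ∏ t, X (p t) ω :=
    fun p => Finset.measurable_prod _ (fun t _ => hm (p t))
  have hbd_term : ∀ (p : Fin N → Fin n) ω, |∏ t, X (p t) ω| ≤ 1 := by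
    intro p ω
    rw [Finset.abs_prod]
    exact Finset.prod_le_one (fun t _ => abs_nonneg _) (fun t _ => hb (p t) ω)
  have hswap : ∫ ω, (∑ i, X i ω) ^ N ∂μ
      = ∑ p : Fin N → Fin n, ∫ ω, ∏ t, X (p t) ω ∂μ := by
    simp_rw [expand]
    exact integral_finset_sum _ (fun p _ => aux_integrable (hmeas_term p) (hbd_term p))
  -- key bound for each multi-index
  have key : ∀ p : Fin N → Fin n,
      ∫ ω, ∏ t, X (p t) ω ∂μ
        ≤ if (Finset.image p Finset.univ).card ≤ k
            then σ2 ^ (Finset.image p Finset.univ).card else 0 := by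
    intro p
    set s := Finset.image p Finset.univ with hs
    set a : Fin n → ℕ := fun i => (Finset.univ.filter fun t => p t = i).card with ha
    have hprod : ∀ ω, ∏ t, X (p t) ω = ∏ i ∈ s, X i ω ^ a i := by
      intro ω
      exact Finset.prod_comp (fun i => X i ω) p
    have hY : iIndepFun
        (fun i => fun ω => X i ω ^ a i) μ := by
      have := h.comp (fun i (x : ℝ) => x ^ a i) (fun i => measurable_id.pow_const (a i))
      exact this
    have hint : ∫ ω, ∏ t, X (p t) ω ∂μ = ∏ i ∈ s, ∫ ω, X i ω ^ a i ∂μ := by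
      simp_rw [hprod]
      exact aux_integral_prod hY (fun i => (hm i).pow_const (a i)) s
    have hifnonneg : (0:ℝ) ≤ if s.card ≤ k then σ2 ^ s.card else 0 := by
      split
      · exact pow_nonneg hσ0 _
      · exact le_refl 0
    by_cases hone : ∃ i ∈ s, a i = 1
    · obtain ⟨i, his, hai⟩ := hone
      have hz : ∫ ω, X i ω ^ a i ∂μ = 0 := by
        rw [hai]; simpa using hzero i
      rw [hint, Finset.prod_eq_zero his hz]
      exact hifnonneg
    · push_neg at hone
      have ha2 : ∀ i ∈ s, 2 ≤ a i := by
        intro i hi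
        have h1 : 0 < a i := by
          rcases Finset.mem_image.1 hi with ⟨t, _, rfl⟩
          exact Finset.card_pos.2 ⟨t, by simp⟩
        have := hone i hi
        omega
      have hsum : ∑ i ∈ s, a i = N := by
        have := Finset.card_eq_sum_card_fiberwise
          (f := p) (s := (Finset.univ : Finset (Fin N))) (t := s)
          (fun t _ => Finset.mem_image_of_mem p (Finset.mem_univ t))
        simpa using this.symm
      have hcard : s.card ≤ k := by
        have h2 : 2 * s.card ≤ ∑ i ∈ s, a i := by
          calc 2 * s.card = ∑ _i ∈ s, 2 := by
                rw [Finset.sum_const, smul_eq_mul, mul_comm]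
            _ ≤ ∑ i ∈ s, a i := Finset.sum_le_sum ha2
        omega
      rw [hint, if_pos hcard]
      calc ∏ i ∈ s, ∫ ω, X i ω ^ a i ∂μ
          ≤ |∏ i ∈ s, ∫ ω, X i ω ^ a i ∂μ| := le_abs_self _
        _ = ∏ i ∈ s, |∫ ω, X i ω ^ a i ∂μ| := Finset.abs_prod _ _
        _ ≤ ∏ i ∈ s, σ2 :=
            Finset.prod_le_prod (fun i _ => abs_nonneg _)
              (fun i hi => hmom i (a i) (ha2 i hi))
        _ = σ2 ^ s.card := Finset.prod_const σ2
  -- counting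
  have hcount : ∑ p : Fin N → Fin n,
      (if (Finset.image p Finset.univ).card ≤ k
        then σ2 ^ (Finset.image p Finset.univ).card else 0)
      ≤ ((k : ℝ) + 1) * ((n : ℝ) ^ k * ((k : ℝ) ^ N * σ2)) := by
    set F : (Fin N → Fin n) → ℝ := fun p =>
      if (Finset.image p Finset.univ).card ≤ k
        then σ2 ^ (Finset.image p Finset.univ).card else 0 with hF
    have hfib := Finset.sum_fiberwise_of_maps_to
      (g := fun p : Fin N → Fin n => Finset.image p Finset.univ)
      (s := Finset.univ) (t := (Finset.univ : Finset (Fin n)).powerset)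
      (fun p _ => Finset.mem_powerset.2 (Finset.subset_univ _)) F
    rw [← hfib]
    have step1 : ∀ u ∈ (Finset.univ : Finset (Fin n)).powerset,
        ∑ p ∈ Finset.univ.filter
            (fun p : Fin N → Fin n => Finset.image p Finset.univ = u), F p
        ≤ ((u.card : ℝ) ^ N) * (if u.card ≤ k then σ2 ^ u.card else 0) := by
      intro u hu
      have hval : ∀ p ∈ Finset.univ.filter
          (fun p : Fin N → Fin n => Finset.image p Finset.univ = u),
          F p = (if u.card ≤ k then σ2 ^ u.card else 0) := by
        intro p hp
        have := (Finset.mem_filter.1 hp).2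
        simp [hF, this]
      rw [Finset.sum_congr rfl hval, Finset.sum_const, nsmul_eq_mul]
      have hcardle : ((Finset.univ.filter
          (fun p : Fin N → Fin n => Finset.image p Finset.univ = u)).card : ℝ)
          ≤ (u.card : ℝ) ^ N := by
        have hsub : Finset.univ.filter
            (fun p : Fin N → Fin n => Finset.image p Finset.univ = u)
            ⊆ Fintype.piFinset (fun _ : Fin N => u) := by
          intro p hp
          rw [Fintype.mem_piFinset]
          intro t
          have heq := (Finset.mem_filter.1 hp).2
          rw [← heq]
          exact Finset.mem_image_of_mem p (Finset.mem_univ t)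
        have := Finset.card_le_card hsub
        rw [Fintype.card_piFinset] at this
        simp only [Finset.prod_const, Finset.card_univ, Fintype.card_fin] at this
        exact_mod_cast le_trans (Nat.cast_le.2 this) (by norm_num)
      have hifnn : (0:ℝ) ≤ if u.card ≤ k then σ2 ^ u.card else 0 := by
        split
        · exact pow_nonneg hσ0 _
        · exact le_refl 0
      exact mul_le_mul_of_nonneg_right hcardle hifnn
    calc ∑ u ∈ (Finset.univ : Finset (Fin n)).powerset,
          ∑ p ∈ Finset.univ.filter
              (fun p : Fin N → Fin n => Finset.image p Finset.univ = u), F p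
        ≤ ∑ u ∈ (Finset.univ : Finset (Fin n)).powerset,
            ((u.card : ℝ) ^ N) * (if u.card ≤ k then σ2 ^ u.card else 0) :=
          Finset.sum_le_sum step1
      _ = ∑ c ∈ Finset.range (n + 1), ∑ u ∈ Finset.powersetCard c Finset.univ,
            ((u.card : ℝ) ^ N) * (if u.card ≤ k then σ2 ^ u.card else 0) := by
          rw [Finset.powerset_card_disjiUnion]; erw [Finset.sum_disjiUnion]
          simp only [Finset.card_univ, Fintype.card_fin]
          rfl
      _ ≤ ∑ c ∈ Finset.range (n + 1),
            (if c ≤ k then ((n:ℝ) ^ k * ((k:ℝ) ^ N * σ2)) else 0) := by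
          apply Finset.sum_le_sum
          intro c _
          have hterm : ∀ u ∈ Finset.powersetCard c (Finset.univ : Finset (Fin n)),
              ((u.card : ℝ) ^ N) * (if u.card ≤ k then σ2 ^ u.card else 0)
              = ((c : ℝ) ^ N) * (if c ≤ k then σ2 ^ c else 0) := by
            intro u hu
            rw [(Finset.mem_powersetCard.1 hu).2]
          rw [Finset.sum_congr rfl hterm, Finset.sum_const, nsmul_eq_mul,
            Finset.card_powersetCard, Finset.card_univ, Fintype.card_fin]
          by_cases hck : c ≤ k
          · rw [if_pos hck, if_pos hck]
            rcases Nat.eq_zero_or_pos c with hc0 | hc1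
            · have hL : (↑(n.choose c) : ℝ) * ((c:ℝ) ^ N * σ2 ^ c) = 0 := by
                subst hc0
                norm_num [zero_pow (show N ≠ 0 by omega)]
              rw [hL]
              positivity
            · have h1 : ((n.choose c : ℕ) : ℝ) ≤ (n:ℝ) ^ k := by
                have hc : n.choose c ≤ n ^ c := Nat.choose_le_pow n c
                have hnk : n ^ c ≤ n ^ k := Nat.pow_le_pow_right hn hck
                exact_mod_cast le_trans hc hnk
              have h2 : ((c:ℝ)) ^ N ≤ (k:ℝ) ^ N := by
                apply pow_le_pow_left₀ (by positivity)
                exact_mod_cast hck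
              have h3 : σ2 ^ c ≤ σ2 := by
                calc σ2 ^ c ≤ σ2 ^ 1 := pow_le_pow_of_le_one hσ0 hσ1 hc1
                  _ = σ2 := pow_one σ2
              have hnn1 : (0:ℝ) ≤ (n.choose c : ℝ) := by positivity
              have hnn2 : (0:ℝ) ≤ ((c:ℝ)) ^ N := by positivity
              have hnn3 : (0:ℝ) ≤ σ2 ^ c := pow_nonneg hσ0 _
              calc (n.choose c : ℝ) * (((c:ℝ)) ^ N * σ2 ^ c)
                  ≤ (n:ℝ)^k * (((c:ℝ)) ^ N * σ2 ^ c) := by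
                    apply mul_le_mul_of_nonneg_right h1 (by positivity)
                _ ≤ (n:ℝ)^k * ((k:ℝ) ^ N * σ2 ^ c) := by
                    apply mul_le_mul_of_nonneg_left
                      (mul_le_mul_of_nonneg_right h2 hnn3) (by positivity)
                _ ≤ (n:ℝ)^k * ((k:ℝ) ^ N * σ2) := by
                    apply mul_le_mul_of_nonneg_left
                      (mul_le_mul_of_nonneg_left h3 (by positivity)) (by positivity)
          · rw [if_neg hck, if_neg hck]
            simp
      _ ≤ ((k : ℝ) + 1) * ((n : ℝ) ^ k * ((k : ℝ) ^ N * σ2)) := by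
          rw [← Finset.sum_filter]
          rw [Finset.sum_const, nsmul_eq_mul]
          apply mul_le_mul_of_nonneg_right _ (by positivity)
          have hsub : (Finset.range (n+1)).filter (fun c => c ≤ k)
              ⊆ Finset.range (k+1) := by
            intro c hc
            have := (Finset.mem_filter.1 hc).2
            exact Finset.mem_range.2 (by omega)
          have := Finset.card_le_card hsub
          rw [Finset.card_range] at this
          exact_mod_cast le_trans (Nat.cast_le.2 this) (by push_cast; linarith)
  calc ∫ ω, (∑ i, X i ω) ^ N ∂μ
      = ∑ p : Fin N → Fin n, ∫ ω, ∏ t, X (p t) ω ∂μ := hswap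
    _ ≤ ∑ p : Fin N → Fin n,
        (if (Finset.image p Finset.univ).card ≤ k
          then σ2 ^ (Finset.image p Finset.univ).card else 0) :=
        Finset.sum_le_sum (fun p _ => key p)
    _ ≤ ((k : ℝ) + 1) * ((n : ℝ) ^ k * ((k : ℝ) ^ N * σ2)) := hcount

/-- for i.i.d. random variables `K_1, …, K_n`, a Borel set `A`,
`I_i = 1_{K_i ∈ A}`, `r̂ = (1/n) Σ I_i` and `r = P(K_1 ∈ A)`, for every `m ≥ 2`
there is a constant `C_m` depending only on `m` with
`‖r̂ − r‖_m ≤ C_m (r(1−r))^{1/m} / √n`. -/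
theorem statement3 (m : ℝ) (hm : 2 ≤ m) :
    ∃ C : ℝ, 0 < C ∧
      ∀ (Ω : Type) (_ : MeasurableSpace Ω) (μ : Measure Ω), IsProbabilityMeasure μ →
      ∀ (n : ℕ) (hn : 0 < n) (K : Fin n → Ω → ℝ),
        (∀ i, Measurable (K i)) →
        iIndepFun K μ →
        (∀ i, IdentDistrib (K i) (K ⟨0, hn⟩) μ μ) →
        ∀ (A : Set ℝ), MeasurableSet A →
        ∀ r : ℝ, r = (μ {ω | K ⟨0, hn⟩ ω ∈ A}).toReal →
        (∫ ω, |(1 / (n : ℝ)) * ∑ i, (A.indicator (fun _ => (1 : ℝ)) (K i ω)) - r| ^ m ∂μ)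
            ^ (1 / m)
          ≤ C * (r * (1 - r)) ^ (1 / m) / Real.sqrt n := by
  have hm0 : (0:ℝ) < m := by linarith
  have hm0' : m ≠ 0 := ne_of_gt hm0
  set k : ℕ := ⌈m / 2⌉₊ with hkdef
  have hk1 : 1 ≤ k := by
    rw [hkdef, Nat.one_le_ceil_iff]
    linarith
  have hm2k : m ≤ 2 * (k : ℝ) := by
    have h1 : m / 2 ≤ (k : ℝ) := Nat.le_ceil (m / 2)
    linarith
  set B : ℝ := 2 + ((k:ℝ) + 1) * (k:ℝ) ^ (2 * k) with hBdef
  have hkpos : (0:ℝ) < (k:ℝ) := by exact_mod_cast hk1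
  have hB1 : 1 ≤ B := by nlinarith [pow_pos hkpos (2*k)]
  refine ⟨B, by linarith, ?_⟩
  intro Ω mΩ μ hμ n hn K hK hind hid A hA r hr
  have hn1 : 1 ≤ n := hn
  have hnR : (0:ℝ) < n := by exact_mod_cast hn
  have hr0 : 0 ≤ r := hr ▸ ENNReal.toReal_nonneg
  have hr1 : r ≤ 1 := by
    rw [hr]
    have h1 : (μ {ω | K ⟨0, hn⟩ ω ∈ A}).toReal ≤ (1 : ENNReal).toReal :=
      ENNReal.toReal_mono ENNReal.one_ne_top prob_le_one
    simpa using h1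
  set σ2 : ℝ := r * (1 - r) with hσ2def
  have hσ0 : 0 ≤ σ2 := mul_nonneg hr0 (by linarith)
  have hσ1 : σ2 ≤ 1 := by nlinarith
  set I : Fin n → Ω → ℝ := fun i ω => A.indicator (fun _ => (1:ℝ)) (K i ω) with hIdef
  set X : Fin n → Ω → ℝ := fun i ω => I i ω - r with hXdef
  have hI01 : ∀ i ω, I i ω = 0 ∨ I i ω = 1 := by
    intro i ω
    by_cases h : K i ω ∈ A
    · right; simp [hIdef, Set.indicator_of_mem h]
    · left; simp [hIdef, Set.indicator_of_notMem h]
  have hImeas : ∀ i, Measurable (I i) := fun i =>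
    (measurable_const.indicator hA).comp (hK i)
  have hXmeas : ∀ i, Measurable (X i) := fun i => (hImeas i).sub measurable_const
  have hXind : iIndepFun X μ := by
    have h2 := hind.comp (fun _ (x:ℝ) => A.indicator (fun _ => (1:ℝ)) x - r)
      (fun _ => (measurable_const.indicator hA).sub measurable_const)
    exact h2
  have hb : ∀ i ω, |X i ω| ≤ 1 := by
    intro i ω
    have hX : X i ω = I i ω - r := rfl
    rw [hX, abs_le]
    rcases hI01 i ω with h | h <;> rw [h] <;> constructor <;> linarith
  have hIintegrable : ∀ i, Integrable (I i) μ := fun i =>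
    aux_integrable (hImeas i) (C := 1)
      (fun ω => by rcases hI01 i ω with h|h <;> rw [h] <;> norm_num)
  have hIint : ∀ i, ∫ ω, I i ω ∂μ = r := by
    intro i
    have h1 : ∀ ω, I i ω = (K i ⁻¹' A).indicator (fun _ => (1:ℝ)) ω := by
      intro ω
      by_cases h : K i ω ∈ A
      · simp [hIdef, Set.indicator_of_mem, h, Set.mem_preimage]
      · simp [hIdef, Set.indicator_of_notMem, h, Set.mem_preimage]
    simp_rw [h1]
    rw [MeasureTheory.integral_indicator_const (1:ℝ) ((hK i) hA)]
    have hmeq : μ (K i ⁻¹' A) = μ (K ⟨0, hn⟩ ⁻¹' A) := (hid i).measure_mem_eq hA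
    rw [measureReal_def, hmeq, smul_eq_mul, mul_one, hr]
    rfl
  have hzero : ∀ i, ∫ ω, X i ω ∂μ = 0 := by
    intro i
    have h1 : (fun ω => X i ω) = fun ω => I i ω - r := rfl
    rw [h1, integral_sub (hIintegrable i) (integrable_const r), hIint i, integral_const]
    simp
  have hXsq : ∀ i, ∫ ω, X i ω ^ 2 ∂μ = σ2 := by
    intro i
    have hpt : ∀ ω, X i ω ^ 2 = I i ω * (1 - 2*r) + r^2 := by
      intro ω
      have hX : X i ω = I i ω - r := rfl
      rcases hI01 i ω with h|h <;> rw [hX, h] <;> ring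
    simp_rw [hpt]
    rw [integral_add ((hIintegrable i).mul_const _) (integrable_const _),
      integral_mul_const, hIint i, integral_const]
    simp only [probReal_univ, measure_univ, ENNReal.toReal_one, smul_eq_mul, one_mul]
    rw [hσ2def]; ring
  have hmom : ∀ i (a : ℕ), 2 ≤ a → |∫ ω, X i ω ^ a ∂μ| ≤ σ2 := by
    intro i a ha2
    have h1 : |∫ ω, X i ω ^ a ∂μ| ≤ ∫ ω, |X i ω| ^ a ∂μ := by
      have h0 := norm_integral_le_integral_norm (μ := μ) (fun ω => X i ω ^ a)
      simpa [Real.norm_eq_abs, abs_pow] using h0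
    have h2 : ∫ ω, |X i ω| ^ a ∂μ ≤ ∫ ω, X i ω ^ 2 ∂μ := by
      apply integral_mono
      · exact aux_integrable ((hXmeas i).abs.pow_const a) (C := 1)
          (fun ω => by
            have h0 : 0 ≤ |X i ω| ^ a := pow_nonneg (abs_nonneg _) a
            rw [abs_of_nonneg h0]
            exact pow_le_one₀ (abs_nonneg _) (hb i ω))
      · exact aux_integrable ((hXmeas i).pow_const 2) (C := 1)
          (fun ω => by
            rw [abs_pow]
            exact pow_le_one₀ (abs_nonneg _) (hb i ω))
      · intro ω
        calc |X i ω| ^ a ≤ |X i ω| ^ 2 :=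
              pow_le_pow_of_le_one (abs_nonneg _) (hb i ω) ha2
          _ = X i ω ^ 2 := sq_abs _
    rw [hXsq i] at h2
    exact le_trans h1 h2
  -- the sum
  have hSmeas : Measurable fun ω => ∑ i, X i ω :=
    Finset.measurable_sum _ (fun i _ => hXmeas i)
  have hbS : ∀ ω, |∑ i, X i ω| ≤ n := by
    intro ω
    calc |∑ i, X i ω| ≤ ∑ i, |X i ω| := Finset.abs_sum_le_sum_abs _ _
      _ ≤ ∑ _i : Fin n, (1:ℝ) := Finset.sum_le_sum (fun i _ => hb i ω)
      _ = n := by simp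
  have hES2 : ∫ ω, (∑ i, X i ω) ^ 2 ∂μ ≤ 2 * ((n:ℝ) * σ2) := by
    have h := aux_moment hn1 hXmeas hXind hσ0 hσ1 hb hzero hmom 1 le_rfl
    refine le_trans (le_of_eq ?_) (le_trans h (le_of_eq ?_))
    · norm_num
    · norm_num
  have hESN : ∫ ω, (∑ i, X i ω) ^ (2*k) ∂μ
      ≤ ((k:ℝ) + 1) * ((n:ℝ) ^ k * ((k:ℝ) ^ (2*k) * σ2)) :=
    aux_moment hn1 hXmeas hXind hσ0 hσ1 hb hzero hmom k hk1
  have hint2 : Integrable (fun ω => (∑ i, X i ω) ^ 2) μ :=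
    aux_integrable (hSmeas.pow_const 2) (C := (n:ℝ)^2)
      (fun ω => by
        rw [abs_pow]
        exact pow_le_pow_left₀ (abs_nonneg _) (hbS ω) 2)
  have hintN : Integrable (fun ω => (∑ i, X i ω) ^ (2*k)) μ :=
    aux_integrable (hSmeas.pow_const (2*k)) (C := (n:ℝ)^(2*k))
      (fun ω => by
        rw [abs_pow]
        exact pow_le_pow_left₀ (abs_nonneg _) (hbS ω) (2*k))
  -- rewrite the goal integrand
  have hZ : ∀ ω, (1 / (n : ℝ)) * ∑ i, (A.indicator (fun _ => (1 : ℝ)) (K i ω)) - r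
      = (∑ i, X i ω) / n := by
    intro ω
    have h1 : ∑ i, X i ω = (∑ i, A.indicator (fun _ => (1:ℝ)) (K i ω)) - n * r := by
      simp only [hXdef, hIdef, Finset.sum_sub_distrib, Finset.sum_const,
        Finset.card_univ, Fintype.card_fin, nsmul_eq_mul]
    rw [h1]
    field_simp
  have hfun : (fun ω => |(1 / (n : ℝ)) * ∑ i, (A.indicator (fun _ => (1 : ℝ)) (K i ω)) - r| ^ m)
      = fun ω => |(∑ i, X i ω) / (n:ℝ)| ^ m := by
    funext ω; rw [hZ ω]
  rw [hfun]
  -- pointwise bound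
  have hptwise : ∀ ω, |(∑ i, X i ω) / (n:ℝ)| ^ m
      ≤ (n:ℝ) ^ (-(m/2)) * ((∑ i, X i ω)^2 / (n:ℝ) + (∑ i, X i ω)^(2*k) / (n:ℝ)^k) := by
    intro ω
    have hsqrtpos : 0 < Real.sqrt n := Real.sqrt_pos.2 hnR
    set t : ℝ := |∑ i, X i ω| / Real.sqrt n with htdef
    have ht0 : 0 ≤ t := div_nonneg (abs_nonneg _) (Real.sqrt_nonneg _)
    have habs : |(∑ i, X i ω) / (n:ℝ)| = t / Real.sqrt n := by
      rw [abs_div, abs_of_pos hnR, htdef, div_div, Real.mul_self_sqrt hnR.le]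
    have hsplit : (t / Real.sqrt n) ^ m = t ^ m * ((n:ℝ) ^ (-(m/2))) := by
      rw [Real.div_rpow ht0 (Real.sqrt_nonneg _)]
      have h1 : (Real.sqrt n) ^ m = (n:ℝ) ^ (m/2) := by
        rw [Real.sqrt_eq_rpow, ← Real.rpow_mul hnR.le]
        congr 1
        ring
      rw [h1, div_eq_mul_inv, ← Real.rpow_neg hnR.le]
    have htm : t ^ m ≤ t ^ (2:ℕ) + t ^ (2*k : ℕ) := by
      rcases le_total t 1 with h | h
      · rcases eq_or_lt_of_le ht0 with h0 | h0
        · rw [← h0, Real.zero_rpow hm0']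
          positivity
        · have h2 := Real.rpow_le_rpow_of_exponent_ge h0 h hm
          have h3 : t ^ (2:ℝ) = t ^ (2:ℕ) := by
            rw [← Real.rpow_natCast t 2]; norm_num
          calc t ^ m ≤ t ^ (2:ℝ) := h2
            _ = t ^ (2:ℕ) := h3
            _ ≤ t ^ (2:ℕ) + t ^ (2*k:ℕ) := le_add_of_nonneg_right (pow_nonneg ht0 _)
      · have h2 : t ^ m ≤ t ^ ((2*k : ℕ) : ℝ) :=
          Real.rpow_le_rpow_of_exponent_le h (by push_cast; linarith)
        have h3 : t ^ ((2*k:ℕ):ℝ) = t ^ (2*k:ℕ) := Real.rpow_natCast t _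
        calc t ^ m ≤ t ^ ((2*k:ℕ):ℝ) := h2
          _ = t ^ (2*k:ℕ) := h3
          _ ≤ t ^ (2:ℕ) + t ^ (2*k:ℕ) := le_add_of_nonneg_left (pow_nonneg ht0 _)
    have ht2 : t ^ (2:ℕ) = (∑ i, X i ω)^2 / (n:ℝ) := by
      rw [htdef, div_pow, sq_abs, Real.sq_sqrt hnR.le]
    have htk : t ^ (2*k:ℕ) = (∑ i, X i ω)^(2*k) / (n:ℝ)^k := by
      rw [htdef, div_pow]
      congr 1
      · exact Even.pow_abs ⟨k, by ring⟩ _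
      · rw [pow_mul, Real.sq_sqrt hnR.le]
    calc |(∑ i, X i ω) / (n:ℝ)| ^ m = (t / Real.sqrt n) ^ m := by rw [habs]
      _ = t ^ m * ((n:ℝ) ^ (-(m/2))) := hsplit
      _ ≤ (t ^ (2:ℕ) + t ^ (2*k:ℕ)) * ((n:ℝ) ^ (-(m/2))) :=
          mul_le_mul_of_nonneg_right htm (Real.rpow_nonneg hnR.le _)
      _ = (n:ℝ) ^ (-(m/2)) * ((∑ i, X i ω)^2 / (n:ℝ) + (∑ i, X i ω)^(2*k) / (n:ℝ)^k) := by
          rw [ht2, htk]; ring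
  -- integrate the pointwise bound
  have hLHSint : ∫ ω, |(∑ i, X i ω) / (n:ℝ)| ^ m ∂μ ≤ (n:ℝ) ^ (-(m/2)) * (σ2 * B) := by
    have hmeasL : Measurable fun ω => |(∑ i, X i ω) / (n:ℝ)| ^ m :=
      ((hSmeas.div_const _).abs).pow measurable_const
    have hbdL : ∀ ω, |(|(∑ i, X i ω) / (n:ℝ)| ^ m)| ≤ 1 := by
      intro ω
      have h1 : |(∑ i, X i ω) / (n:ℝ)| ≤ 1 := by
        rw [abs_div, abs_of_pos hnR, div_le_one hnR]
        exact hbS ω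
      rw [abs_of_nonneg (Real.rpow_nonneg (abs_nonneg _) m)]
      exact Real.rpow_le_one (abs_nonneg _) h1 hm0.le
    have hintR : Integrable (fun ω => (n:ℝ) ^ (-(m/2)) *
        ((∑ i, X i ω)^2 / (n:ℝ) + (∑ i, X i ω)^(2*k) / (n:ℝ)^k)) μ :=
      ((hint2.div_const _).add (hintN.div_const _)).const_mul _
    have hmono := integral_mono (aux_integrable hmeasL hbdL) hintR hptwise
    have hRHS : ∫ ω, (n:ℝ) ^ (-(m/2)) *
        ((∑ i, X i ω)^2 / (n:ℝ) + (∑ i, X i ω)^(2*k) / (n:ℝ)^k) ∂μ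
        = (n:ℝ) ^ (-(m/2)) * ((∫ ω, (∑ i, X i ω)^2 ∂μ) / (n:ℝ)
            + (∫ ω, (∑ i, X i ω)^(2*k) ∂μ) / (n:ℝ)^k) := by
      rw [integral_const_mul, integral_add (hint2.div_const _) (hintN.div_const _),
        integral_div, integral_div]
    have h2' : (∫ ω, (∑ i, X i ω)^2 ∂μ) / (n:ℝ) ≤ 2 * σ2 := by
      rw [div_le_iff₀ hnR]
      calc ∫ ω, (∑ i, X i ω)^2 ∂μ ≤ 2 * ((n:ℝ) * σ2) := hES2
        _ = 2 * σ2 * (n:ℝ) := by ring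
    have hN' : (∫ ω, (∑ i, X i ω)^(2*k) ∂μ) / (n:ℝ)^k
        ≤ ((k:ℝ)+1) * ((k:ℝ)^(2*k) * σ2) := by
      rw [div_le_iff₀ (by positivity)]
      calc ∫ ω, (∑ i, X i ω)^(2*k) ∂μ
          ≤ ((k:ℝ)+1) * ((n:ℝ)^k * ((k:ℝ)^(2*k) * σ2)) := hESN
        _ = ((k:ℝ)+1) * ((k:ℝ)^(2*k) * σ2) * (n:ℝ)^k := by ring
    calc ∫ ω, |(∑ i, X i ω) / (n:ℝ)| ^ m ∂μ
        ≤ ∫ ω, (n:ℝ) ^ (-(m/2)) *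
            ((∑ i, X i ω)^2 / (n:ℝ) + (∑ i, X i ω)^(2*k) / (n:ℝ)^k) ∂μ := hmono
      _ = (n:ℝ) ^ (-(m/2)) * ((∫ ω, (∑ i, X i ω)^2 ∂μ) / (n:ℝ)
            + (∫ ω, (∑ i, X i ω)^(2*k) ∂μ) / (n:ℝ)^k) := hRHS
      _ ≤ (n:ℝ) ^ (-(m/2)) * (2 * σ2 + ((k:ℝ)+1) * ((k:ℝ)^(2*k) * σ2)) :=
          mul_le_mul_of_nonneg_left (add_le_add h2' hN') (Real.rpow_nonneg hnR.le _)
      _ = (n:ℝ) ^ (-(m/2)) * (σ2 * B) := by rw [hBdef]; ring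
  -- final rpow computation
  have hintnn : 0 ≤ ∫ ω, |(∑ i, X i ω) / (n:ℝ)| ^ m ∂μ :=
    integral_nonneg (fun ω => Real.rpow_nonneg (abs_nonneg _) m)
  have hfinal : (∫ ω, |(∑ i, X i ω) / (n:ℝ)| ^ m ∂μ) ^ (1/m)
      ≤ ((n:ℝ) ^ (-(m/2)) * (σ2 * B)) ^ (1/m) :=
    Real.rpow_le_rpow hintnn hLHSint (by positivity)
  have hsplit2 : ((n:ℝ) ^ (-(m/2)) * (σ2 * B)) ^ (1/m)
      = ((n:ℝ) ^ (-(m/2))) ^ (1/m) * (σ2 * B) ^ (1/m) :=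
    Real.mul_rpow (Real.rpow_nonneg hnR.le _) (mul_nonneg hσ0 (by linarith))
  have hn_part : ((n:ℝ) ^ (-(m/2))) ^ (1/m) = (Real.sqrt n)⁻¹ := by
    rw [← Real.rpow_mul hnR.le]
    rw [show (-(m/2)) * (1/m) = -(1/2) by field_simp]
    rw [Real.rpow_neg hnR.le, Real.sqrt_eq_rpow]
  have hsb : (σ2 * B) ^ (1/m) ≤ σ2 ^ (1/m) * B := by
    rw [Real.mul_rpow hσ0 (by linarith : (0:ℝ) ≤ B)]
    apply mul_le_mul_of_nonneg_left _ (Real.rpow_nonneg hσ0 _)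
    calc B ^ (1/m) ≤ B ^ (1:ℝ) :=
          Real.rpow_le_rpow_of_exponent_le hB1 (by rw [div_le_one hm0]; linarith)
      _ = B := Real.rpow_one B
  calc (∫ ω, |(∑ i, X i ω) / (n:ℝ)| ^ m ∂μ) ^ (1/m)
      ≤ ((n:ℝ) ^ (-(m/2)) * (σ2 * B)) ^ (1/m) := hfinal
    _ = (Real.sqrt n)⁻¹ * (σ2 * B) ^ (1/m) := by rw [hsplit2, hn_part]
    _ ≤ (Real.sqrt n)⁻¹ * (σ2 ^ (1/m) * B) :=
        mul_le_mul_of_nonneg_left hsb (inv_nonneg.2 (Real.sqrt_nonneg _))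
    _ = B * σ2 ^ (1/m) / Real.sqrt n := by rw [div_eq_mul_inv]; ring
end

section
/- Under assumptions A1 and A2 (independent censoring with Pareto-type tails whose slowly varying factors satisfy |xL'(x)/L(x)| = O(1/log^κ x)), the conditional probability λ(x) = Prob(X ≤ Y | min(X,Y) = x) satisfies |λ(x) − γ_Y/(γ_X+γ_Y)| ≤ C/log^κ x for some constant C and all sufficiently large x. -/
open Filter Asymptotics Real

/-- under A1, A2, the conditional probability
`λ(x) = f_X(x)P_Y(x)/(f_X(x)P_Y(x)+f_Y(x)P_X(x))` satisfies
`|λ(x) − γ_Y/(γ_X+γ_Y)| ≤ C/log^κ x` for some constant `C` and all large `x`. -/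
theorem statement6
    (LX LY : ℝ → ℝ) (αX αY κ : ℝ) (hαX : 0 < αX) (hαY : 0 < αY) (hκ : 0 < κ)
    (hLXd : Differentiable ℝ LX) (hLYd : Differentiable ℝ LY)
    (hLXpos : ∀ x : ℝ, 0 < x → 0 < LX x) (hLYpos : ∀ x : ℝ, 0 < x → 0 < LY x)
    (hA2X : (fun x => x * deriv LX x / LX x) =O[atTop] (fun x => 1 / (Real.log x) ^ κ))
    (hA2Y : (fun x => x * deriv LY x / LY x) =O[atTop] (fun x => 1 / (Real.log x) ^ κ))
    (PX PY fX fY lam : ℝ → ℝ)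
    (hPX : ∀ x : ℝ, PX x = LX x * x ^ (-αX))
    (hPY : ∀ x : ℝ, PY x = LY x * x ^ (-αY))
    (hfX : ∀ x : ℝ, 0 < x → fX x = -deriv PX x)
    (hfY : ∀ x : ℝ, 0 < x → fY x = -deriv PY x)
    (hlam : ∀ x : ℝ, 0 < x →
      lam x = fX x * PY x / (fX x * PY x + fY x * PX x))
    (γX γY : ℝ) (hγX : γX = 1 / αX) (hγY : γY = 1 / αY) :
    ∃ C : ℝ, ∀ᶠ x in atTop, |lam x - γY / (γX + γY)| ≤ C / (Real.log x) ^ κ := by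
  subst hγX hγY
  obtain ⟨C1, hC1nn, hC1w⟩ := hA2X.exists_nonneg
  obtain ⟨C2, hC2nn, hC2w⟩ := hA2Y.exists_nonneg
  have hC1b := hC1w.bound
  have hC2b := hC2w.bound
  have hsne : αX + αY ≠ 0 := by positivity
  have htgt : 1 / αY / (1 / αX + 1 / αY) = αX / (αX + αY) := by
    rw [div_add_div _ _ hαX.ne' hαY.ne', div_div_eq_mul_div, div_mul_eq_mul_div,
      one_mul, mul_one, one_mul, mul_comm αX αY, mul_comm αY αX, mul_div_assoc,
      div_self hαY.ne', mul_one, add_comm]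
  refine ⟨2 * (αX * C2 + αY * C1) / (αX + αY) ^ 2, ?_⟩
  have htend : Tendsto (fun x => max C1 C2 / Real.log x ^ κ) atTop (nhds 0) :=
    tendsto_const_nhds.div_atTop ((tendsto_rpow_atTop hκ).comp Real.tendsto_log_atTop)
  have hsm : ∀ᶠ x in atTop, max C1 C2 / Real.log x ^ κ < (αX + αY) / 4 :=
    htend.eventually (gt_mem_nhds (by positivity))
  filter_upwards [hC1b, hC2b, hsm, eventually_gt_atTop 1] with x hb1 hb2 hsmx hx1
  have hxpos : (0:ℝ) < x := lt_trans one_pos hx1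
  have hlx : 0 < Real.log x := Real.log_pos hx1
  have hlκ : 0 < Real.log x ^ κ := Real.rpow_pos_of_pos hlx κ
  set εX := x * deriv LX x / LX x with hεX
  set εY := x * deriv LY x / LY x with hεY
  have hb1' : |εX| ≤ C1 / Real.log x ^ κ := by
    rw [Real.norm_eq_abs, Real.norm_eq_abs,
      abs_of_pos (by positivity : (0:ℝ) < 1 / Real.log x ^ κ), mul_one_div] at hb1
    exact hb1
  have hb2' : |εY| ≤ C2 / Real.log x ^ κ := by
    rw [Real.norm_eq_abs, Real.norm_eq_abs,
      abs_of_pos (by positivity : (0:ℝ) < 1 / Real.log x ^ κ), mul_one_div] at hb2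
    exact hb2
  have hεX4 : |εX| < (αX + αY) / 4 :=
    lt_of_le_of_lt (hb1'.trans ((div_le_div_iff_of_pos_right hlκ).mpr (le_max_left C1 C2))) hsmx
  have hεY4 : |εY| < (αX + αY) / 4 :=
    lt_of_le_of_lt (hb2'.trans ((div_le_div_iff_of_pos_right hlκ).mpr (le_max_right C1 C2))) hsmx
  have haX := abs_lt.mp hεX4
  have haY := abs_lt.mp hεY4
  have hD : (αX + αY) / 2 ≤ αX + αY - εX - εY := by linarith [haX.1, haX.2, haY.1, haY.2]
  have hDpos : 0 < αX + αY - εX - εY := lt_of_lt_of_le (by positivity) hD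
  have hPXeq : PX = fun y => LX y * y ^ (-αX) := funext hPX
  have hPYeq : PY = fun y => LY y * y ^ (-αY) := funext hPY
  have hdPX : deriv PX x = deriv LX x * x ^ (-αX) + LX x * (-αX * x ^ (-αX - 1)) := by
    rw [hPXeq]
    exact ((hLXd x).hasDerivAt.mul (Real.hasDerivAt_rpow_const (Or.inl hxpos.ne'))).deriv
  have hdPY : deriv PY x = deriv LY x * x ^ (-αY) + LY x * (-αY * x ^ (-αY - 1)) := by
    rw [hPYeq]
    exact ((hLYd x).hasDerivAt.mul (Real.hasDerivAt_rpow_const (Or.inl hxpos.ne'))).deriv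
  have e1 : x ^ (-αX - 1) * x ^ (-αY) = x ^ (-(αX + αY) - 1) := by
    rw [← Real.rpow_add hxpos]; congr 1; ring
  have e2 : x ^ (-αX) * x ^ (-αY) = x * x ^ (-(αX + αY) - 1) := by
    rw [← Real.rpow_add hxpos,
      show x * x ^ (-(αX + αY) - 1) = x ^ (1:ℝ) * x ^ (-(αX + αY) - 1) from by
        rw [Real.rpow_one], ← Real.rpow_add hxpos]
    congr 1; ring
  have e1' : x ^ (-αY - 1) * x ^ (-αX) = x ^ (-(αX + αY) - 1) := by
    rw [← Real.rpow_add hxpos]; congr 1; ring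
  have e2' : x ^ (-αY) * x ^ (-αX) = x * x ^ (-(αX + αY) - 1) := by
    rw [mul_comm]; exact e2
  have hLXne : LX x ≠ 0 := (hLXpos x hxpos).ne'
  have hLYne : LY x ≠ 0 := (hLYpos x hxpos).ne'
  have key1 : fX x * PY x = (LX x * LY x * x ^ (-(αX + αY) - 1)) * (αX - εX) := by
    rw [hfX x hxpos, hdPX, hPY]
    rw [show -(deriv LX x * x ^ (-αX) + LX x * (-αX * x ^ (-αX - 1))) * (LY x * x ^ (-αY))
        = αX * (LX x * LY x) * (x ^ (-αX - 1) * x ^ (-αY))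
          - deriv LX x * LY x * (x ^ (-αX) * x ^ (-αY)) from by ring, e1, e2, hεX]
    field_simp
  have key2 : fY x * PX x = (LX x * LY x * x ^ (-(αX + αY) - 1)) * (αY - εY) := by
    rw [hfY x hxpos, hdPY, hPX]
    rw [show -(deriv LY x * x ^ (-αY) + LY x * (-αY * x ^ (-αY - 1))) * (LX x * x ^ (-αX))
        = αY * (LX x * LY x) * (x ^ (-αY - 1) * x ^ (-αX))
          - deriv LY x * LX x * (x ^ (-αY) * x ^ (-αX)) from by ring, e1', e2', hεY]
    field_simp
  have hT : 0 < LX x * LY x * x ^ (-(αX + αY) - 1) := by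
    have h1 := hLXpos x hxpos
    have h2 := hLYpos x hxpos
    positivity
  have hlamx : lam x = (αX - εX) / (αX + αY - εX - εY) := by
    rw [hlam x hxpos, key1, key2,
      show (LX x * LY x * x ^ (-(αX + αY) - 1)) * (αX - εX)
          + (LX x * LY x * x ^ (-(αX + αY) - 1)) * (αY - εY)
        = (LX x * LY x * x ^ (-(αX + αY) - 1)) * (αX + αY - εX - εY) from by ring,
      mul_div_mul_left _ _ hT.ne']
  rw [hlamx, htgt]
  have hnum : (αX - εX) / (αX + αY - εX - εY) - αX / (αX + αY)
      = (αX * εY - αY * εX) / ((αX + αY - εX - εY) * (αX + αY)) := by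
    field_simp
    ring
  rw [hnum, abs_div, abs_of_pos (mul_pos hDpos (by positivity : (0:ℝ) < αX + αY))]
  have habs2 : |αX * εY - αY * εX| ≤ (αX * C2 + αY * C1) / Real.log x ^ κ := by
    calc |αX * εY - αY * εX| ≤ |αX * εY| + |αY * εX| := abs_sub _ _
      _ = αX * |εY| + αY * |εX| := by
          rw [abs_mul, abs_mul, abs_of_pos hαX, abs_of_pos hαY]
      _ ≤ αX * (C2 / Real.log x ^ κ) + αY * (C1 / Real.log x ^ κ) := by
          have := hαX.le; have := hαY.le; gcongr
      _ = (αX * C2 + αY * C1) / Real.log x ^ κ := by ring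
  calc |αX * εY - αY * εX| / ((αX + αY - εX - εY) * (αX + αY))
      ≤ ((αX * C2 + αY * C1) / Real.log x ^ κ) / ((αX + αY) / 2 * (αX + αY)) := by
        apply div_le_div₀ (by positivity) habs2 (by positivity)
        exact mul_le_mul_of_nonneg_right hD (by positivity)
    _ = 2 * (αX * C2 + αY * C1) / (αX + αY) ^ 2 / Real.log x ^ κ := by
        field_simp
end

section
/- Let q̂(t) = (1/n) Σ_{i=1}^n δ_i 1_{Z_i ≥ t} with Z_i = min(X_i, Y_i), δ_i = 1_{X_i ≤ Y_i}, for an i.i.d. sample from the censoring model satisfying A1 and A2. Then |E q̂(t) − (γ_Y/(γ_X+γ_Y)) P_Z(t)| ≤ (C/log^κ t) P_Z(t) for some constant C and all sufficiently large t. -/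
open Filter Asymptotics MeasureTheory ProbabilityTheory Real

section Aux
variable {Ω : Type*} [MeasurableSpace Ω] (μ : Measure Ω) [IsProbabilityMeasure μ]
  (W : Ω → ℝ) (G : ℝ → ℝ)

lemma aux_map_Ioi (hWm : Measurable W) (htail : ∀ x : ℝ, 0 < x → (μ {ω | x < W ω}).toReal = G x)
    (x : ℝ) (hx : 0 < x) : μ.map W (Set.Ioi x) = ENNReal.ofReal (G x) := by
  rw [Measure.map_apply hWm measurableSet_Ioi]
  have h1 : W ⁻¹' Set.Ioi x = {ω | x < W ω} := rfl
  rw [h1, ← htail x hx, ENNReal.ofReal_toReal (measure_ne_top _ _)]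

lemma aux_map_Ici (hWm : Measurable W) (hG : ContinuousOn G (Set.Ioi 0))
    (htail : ∀ x : ℝ, 0 < x → (μ {ω | x < W ω}).toReal = G x)
    (x : ℝ) (hx : 0 < x) : μ.map W (Set.Ici x) = ENNReal.ofReal (G x) := by
  set ν := μ.map W with hν
  have hIoi : ∀ y : ℝ, 0 < y → ν (Set.Ioi y) = ENNReal.ofReal (G y) :=
    aux_map_Ioi μ W G hWm htail
  have hsing : ν {x} = 0 := by
    have key : ∀ ε : ℝ, 0 < ε → ε < x → (ν {x}).toReal ≤ G (x - ε) - G x := by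
      intro ε hε hεx
      have hle : x - ε ≤ x := by linarith
      have hsub : ({x} : Set ℝ) ⊆ Set.Ioc (x - ε) x := by
        intro y hy; rw [Set.mem_singleton_iff] at hy; subst hy
        exact ⟨by linarith, le_rfl⟩
      have hunion : ν (Set.Ioi (x - ε)) = ν (Set.Ioc (x - ε) x) + ν (Set.Ioi x) := by
        rw [← measure_union (Set.Ioc_disjoint_Ioi le_rfl) measurableSet_Ioi,
          Set.Ioc_union_Ioi_eq_Ioi hle]
      have h2 : (ν (Set.Ioc (x - ε) x)).toReal = G (x - ε) - G x := by
        have := hunion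
        rw [hIoi _ (by linarith), hIoi _ hx] at this
        have h3 : (ENNReal.ofReal (G (x - ε))).toReal
            = (ν (Set.Ioc (x - ε) x)).toReal + (ENNReal.ofReal (G x)).toReal := by
          rw [this, ENNReal.toReal_add (measure_ne_top _ _) ENNReal.ofReal_ne_top]
        have hGx : 0 ≤ G x := by rw [← htail x hx]; exact ENNReal.toReal_nonneg
        have hGxe : 0 ≤ G (x - ε) := by rw [← htail _ (by linarith : (0:ℝ) < x - ε)]
                                        exact ENNReal.toReal_nonneg
        rw [ENNReal.toReal_ofReal hGxe, ENNReal.toReal_ofReal hGx] at h3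
        linarith
      calc (ν {x}).toReal ≤ (ν (Set.Ioc (x - ε) x)).toReal := by
            apply ENNReal.toReal_mono (measure_ne_top _ _) (measure_mono hsub)
        _ = G (x - ε) - G x := h2
    have hlim : Tendsto (fun ε : ℝ => G (x - ε) - G x) (nhdsWithin 0 (Set.Ioi 0)) (nhds 0) := by
      have h1 : Tendsto (fun ε : ℝ => x - ε) (nhdsWithin 0 (Set.Ioi 0))
          (nhdsWithin x (Set.Ioi 0)) := by
        rw [tendsto_nhdsWithin_iff]
        constructor
        · have : Tendsto (fun ε : ℝ => x - ε) (nhds 0) (nhds (x - 0)) :=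
            (tendsto_const_nhds.sub tendsto_id)
          simpa using this.mono_left nhdsWithin_le_nhds
        · have hmem : Set.Iio x ∈ nhdsWithin (0:ℝ) (Set.Ioi 0) :=
            nhdsWithin_le_nhds (Iio_mem_nhds hx)
          filter_upwards [hmem] with ε hε
          exact Set.mem_Ioi.2 (by simp at hε ⊢; linarith)
      have h2 : Tendsto (fun ε : ℝ => G (x - ε)) (nhdsWithin 0 (Set.Ioi 0)) (nhds (G x)) :=
        (hG x hx).tendsto.comp h1
      have := h2.sub (tendsto_const_nhds (x := G x))
      simpa using this
    have hnb : (nhdsWithin (0:ℝ) (Set.Ioi 0)).NeBot := nhdsGT_neBot 0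
    have hle0 : (ν {x}).toReal ≤ 0 := by
      apply ge_of_tendsto hlim
      have hmem : Set.Iio x ∈ nhdsWithin (0:ℝ) (Set.Ioi 0) := nhdsWithin_le_nhds (Iio_mem_nhds hx)
      filter_upwards [hmem, self_mem_nhdsWithin] with ε h1 h2
      exact key ε (Set.mem_Ioi.1 h2) (Set.mem_Iio.1 h1)
    have : (ν {x}).toReal = 0 := le_antisymm hle0 ENNReal.toReal_nonneg
    exact (ENNReal.toReal_eq_zero_iff _).1 this |>.resolve_right (measure_ne_top _ _)
  have : Set.Ici x = insert x (Set.Ioi x) := by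
    rw [Set.Ioi_insert]
  rw [this, Set.insert_eq,
    measure_union (Set.disjoint_singleton_left.2 (by simp)) measurableSet_Ioi,
    hsing, zero_add, hIoi x hx]

lemma aux_tendsto (hWm : Measurable W) (htail : ∀ x : ℝ, 0 < x → (μ {ω | x < W ω}).toReal = G x) :
    Tendsto G atTop (nhds 0) := by
  set ν := μ.map W with hν
  have h1 : Tendsto (fun x : ℝ => ν (Set.Ioi x)) atTop (nhds (ν (⋂ x : ℝ, Set.Ioi x))) :=
    tendsto_measure_iInter_atTop (fun i => measurableSet_Ioi.nullMeasurableSet)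
      (fun i j hij => Set.Ioi_subset_Ioi hij) ⟨0, measure_ne_top _ _⟩
  have h2 : (⋂ x : ℝ, Set.Ioi x) = (∅ : Set ℝ) := by
    ext y; simp only [Set.mem_iInter, Set.mem_Ioi, Set.mem_empty_iff_false, iff_false, not_forall]
    exact ⟨y, by simp⟩
  rw [h2] at h1; simp only [measure_empty] at h1
  have h3 : Tendsto (fun x : ℝ => (ν (Set.Ioi x)).toReal) atTop (nhds 0) := by
    have := (ENNReal.tendsto_toReal (a := 0) (by simp)).comp h1
    simpa [Function.comp_def] using this
  apply h3.congr'
  filter_upwards [eventually_gt_atTop 0] with x hx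
  rw [Measure.map_apply hWm measurableSet_Ioi]
  exact htail x hx

end Aux

set_option maxHeartbeats 2000000 in
/-- for an i.i.d. sample from the censoring model under A1 and A2,
`E q̂(t) = P(X ≤ Y, min(X,Y) ≥ t)` satisfies
`|E q̂(t) − (γ_Y/(γ_X+γ_Y)) P_Z(t)| ≤ (C/log^κ t) P_Z(t)` for a constant `C`
and all sufficiently large `t` (here `P_Z = P_X P_Y`). -/
theorem statement7
    {Ω : Type*} [MeasurableSpace Ω] (μ : Measure Ω) [IsProbabilityMeasure μ]
    (X Y : Ω → ℝ) (hXm : Measurable X) (hYm : Measurable Y)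
    (hindep : IndepFun X Y μ)
    (LX LY : ℝ → ℝ) (αX αY κ : ℝ) (hαX : 0 < αX) (hαY : 0 < αY) (hκ : 0 < κ)
    (hLXd : Differentiable ℝ LX) (hLYd : Differentiable ℝ LY)
    (hLXpos : ∀ x : ℝ, 0 < x → 0 < LX x) (hLYpos : ∀ x : ℝ, 0 < x → 0 < LY x)
    (hA2X : (fun x => x * deriv LX x / LX x) =O[atTop] (fun x => 1 / (Real.log x) ^ κ))
    (hA2Y : (fun x => x * deriv LY x / LY x) =O[atTop] (fun x => 1 / (Real.log x) ^ κ))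
    (hXtail : ∀ x : ℝ, 0 < x → (μ {ω | x < X ω}).toReal = LX x * x ^ (-αX))
    (hYtail : ∀ x : ℝ, 0 < x → (μ {ω | x < Y ω}).toReal = LY x * x ^ (-αY))
    (γX γY : ℝ) (hγX : γX = 1 / αX) (hγY : γY = 1 / αY)
    (PZ : ℝ → ℝ) (hPZ : ∀ x : ℝ, PZ x = (LX x * x ^ (-αX)) * (LY x * x ^ (-αY))) :
    ∃ C : ℝ, ∀ᶠ t in atTop,
      |(μ {ω | X ω ≤ Y ω ∧ t ≤ min (X ω) (Y ω)}).toReal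
          - γY / (γX + γY) * PZ t| ≤ C / (Real.log t) ^ κ * PZ t := by
  have hA : 0 < αX + αY := by linarith
  set gX : ℝ → ℝ := fun x => LX x * x ^ (-αX) with hgX_def
  set gY : ℝ → ℝ := fun x => LY x * x ^ (-αY) with hgY_def
  set fX : ℝ → ℝ := fun s => -deriv gX s with hfX_def
  set fY : ℝ → ℝ := fun s => -deriv gY s with hfY_def
  set eX : ℝ → ℝ := fun x => x * deriv LX x / LX x with heX_def
  set eY : ℝ → ℝ := fun x => x * deriv LY x / LY x with heY_def
  -- continuity of tails on (0, ∞)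
  have hrpow_cont : ∀ p : ℝ, ContinuousOn (fun x : ℝ => x ^ p) (Set.Ioi 0) := fun p x hx =>
    (Real.continuousAt_rpow_const x p (Or.inl (ne_of_gt hx))).continuousWithinAt
  have hgXc : ContinuousOn gX (Set.Ioi 0) :=
    (hLXd.continuous.continuousOn).mul (hrpow_cont (-αX))
  have hgYc : ContinuousOn gY (Set.Ioi 0) :=
    (hLYd.continuous.continuousOn).mul (hrpow_cont (-αY))
  -- positivity of tails
  have hgXpos : ∀ x : ℝ, 0 < x → 0 < gX x := fun x hx =>
    mul_pos (hLXpos x hx) (Real.rpow_pos_of_pos hx _)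
  have hgYpos : ∀ x : ℝ, 0 < x → 0 < gY x := fun x hx =>
    mul_pos (hLYpos x hx) (Real.rpow_pos_of_pos hx _)
  -- tails at most 1
  have hgXle1 : ∀ x : ℝ, 0 < x → gX x ≤ 1 := by
    intro x hx
    show LX x * x ^ (-αX) ≤ 1
    rw [← hXtail x hx]
    exact ENNReal.toReal_le_of_le_ofReal zero_le_one (by simpa using prob_le_one)
  have hgYle1 : ∀ x : ℝ, 0 < x → gY x ≤ 1 := by
    intro x hx
    show LY x * x ^ (-αY) ≤ 1
    rw [← hYtail x hx]
    exact ENNReal.toReal_le_of_le_ofReal zero_le_one (by simpa using prob_le_one)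
  -- antitone
  have hgX_anti : ∀ x y : ℝ, 0 < x → x ≤ y → gX y ≤ gX x := by
    intro x y hx hxy
    show LX y * y ^ (-αX) ≤ LX x * x ^ (-αX)
    rw [← hXtail x hx, ← hXtail y (hx.trans_le hxy)]
    exact ENNReal.toReal_mono (measure_ne_top _ _)
      (measure_mono (fun ω hω => lt_of_le_of_lt hxy hω))
  -- limits at infinity
  have htendX : Tendsto gX atTop (nhds 0) := aux_tendsto μ X gX hXm hXtail
  have htendY : Tendsto gY atTop (nhds 0) := aux_tendsto μ Y gY hYm hYtail
  -- derivatives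
  have hDX : ∀ x : ℝ, 0 < x →
      HasDerivAt gX (deriv LX x * x ^ (-αX) + LX x * (-αX * x ^ (-αX - 1))) x := by
    intro x hx
    exact (hLXd x).hasDerivAt.mul (Real.hasDerivAt_rpow_const (Or.inl hx.ne'))
  have hDY : ∀ x : ℝ, 0 < x →
      HasDerivAt gY (deriv LY x * x ^ (-αY) + LY x * (-αY * x ^ (-αY - 1))) x := by
    intro x hx
    exact (hLYd x).hasDerivAt.mul (Real.hasDerivAt_rpow_const (Or.inl hx.ne'))
  have hfX_eq : ∀ x : ℝ, 0 < x →
      fX x = -(deriv LX x * x ^ (-αX) + LX x * (-αX * x ^ (-αX - 1))) := by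
    intro x hx; rw [hfX_def]; simp only; rw [(hDX x hx).deriv]
  have hfY_eq : ∀ x : ℝ, 0 < x →
      fY x = -(deriv LY x * x ^ (-αY) + LY x * (-αY * x ^ (-αY - 1))) := by
    intro x hx; rw [hfY_def]; simp only; rw [(hDY x hx).deriv]
  have hfX_id : ∀ x : ℝ, 0 < x → fX x = gX x / x * (αX - eX x) := by
    intro x hx
    rw [hfX_eq x hx, heX_def, hgX_def]
    simp only
    have h1 : x ^ (-αX - 1) = x ^ (-αX) / x := by
      rw [Real.rpow_sub hx, Real.rpow_one]
    rw [h1]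
    have hL := (hLXpos x hx).ne'
    field_simp
    ring
  have hfY_id : ∀ x : ℝ, 0 < x → fY x = gY x / x * (αY - eY x) := by
    intro x hx
    rw [hfY_eq x hx, heY_def, hgY_def]
    simp only
    have h1 : x ^ (-αY - 1) = x ^ (-αY) / x := by
      rw [Real.rpow_sub hx, Real.rpow_one]
    rw [h1]
    have hL := (hLYpos x hx).ne'
    field_simp
    ring
  -- big-O constants
  obtain ⟨cX, hcX⟩ := isBigO_iff.1 hA2X
  obtain ⟨cY, hcY⟩ := isBigO_iff.1 hA2Y
  set CX := |cX| with hCX_def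
  set CY := |cY| with hCY_def
  set c₂ : ℝ := αX * CY + αY * CX with hc2_def
  have hc₂ : 0 ≤ c₂ := by positivity
  -- the eventual goodness predicate
  have hEv : ∀ᶠ x in atTop, Real.exp 1 ≤ x ∧
      |eX x| ≤ CX / Real.log x ^ κ ∧ |eY x| ≤ CY / Real.log x ^ κ ∧
      |eX x| ≤ αX / 2 ∧ |eY x| ≤ αY / 2 ∧ |eX x| + |eY x| ≤ (αX + αY) / 2 := by
    have htend : Tendsto (fun x : ℝ => Real.log x ^ κ) atTop atTop :=
      (tendsto_rpow_atTop hκ).comp Real.tendsto_log_atTop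
    have hzX : Tendsto (fun x : ℝ => CX / Real.log x ^ κ) atTop (nhds 0) :=
      tendsto_const_nhds.div_atTop htend
    have hzY : Tendsto (fun x : ℝ => CY / Real.log x ^ κ) atTop (nhds 0) :=
      tendsto_const_nhds.div_atTop htend
    have hzS : Tendsto (fun x : ℝ => (CX + CY) / Real.log x ^ κ) atTop (nhds 0) :=
      tendsto_const_nhds.div_atTop htend
    filter_upwards [hcX, hcY, Real.tendsto_log_atTop.eventually_ge_atTop 1,
      eventually_ge_atTop (Real.exp 1),
      hzX.eventually (eventually_le_nhds (by positivity : (0:ℝ) < αX / 2)),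
      hzY.eventually (eventually_le_nhds (by positivity : (0:ℝ) < αY / 2)),
      hzS.eventually (eventually_le_nhds (by positivity : (0:ℝ) < (αX + αY) / 2))]
      with x h1 h2 h3 h4 h5 h6 h7
    have hl1 : 1 ≤ Real.log x ^ κ := Real.one_le_rpow h3 hκ.le
    have hlpos : 0 < Real.log x ^ κ := lt_of_lt_of_le one_pos hl1
    have hnorm : ‖(1:ℝ) / Real.log x ^ κ‖ = 1 / Real.log x ^ κ := by
      rw [Real.norm_eq_abs, abs_of_nonneg (by positivity)]
    have hbX : |eX x| ≤ CX / Real.log x ^ κ := by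
      have := h1
      rw [Real.norm_eq_abs, hnorm] at this
      calc |eX x| ≤ cX * (1 / Real.log x ^ κ) := this
        _ ≤ CX * (1 / Real.log x ^ κ) :=
            mul_le_mul_of_nonneg_right (le_abs_self cX) (by positivity)
        _ = CX / Real.log x ^ κ := by rw [mul_one_div]
    have hbY : |eY x| ≤ CY / Real.log x ^ κ := by
      have := h2
      rw [Real.norm_eq_abs, hnorm] at this
      calc |eY x| ≤ cY * (1 / Real.log x ^ κ) := this
        _ ≤ CY * (1 / Real.log x ^ κ) :=
            mul_le_mul_of_nonneg_right (le_abs_self cY) (by positivity)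
        _ = CY / Real.log x ^ κ := by rw [mul_one_div]
    refine ⟨h4, hbX, hbY, hbX.trans h5, hbY.trans h6, ?_⟩
    calc |eX x| + |eY x| ≤ CX / Real.log x ^ κ + CY / Real.log x ^ κ := add_le_add hbX hbY
      _ = (CX + CY) / Real.log x ^ κ := by rw [add_div]
      _ ≤ (αX + αY) / 2 := h7
  obtain ⟨t0, ht0⟩ := eventually_atTop.1 hEv
  -- basic consequences
  have ht0e : ∀ x : ℝ, t0 ≤ x → Real.exp 1 ≤ x := fun x hx => (ht0 x hx).1
  have hxpos : ∀ x : ℝ, t0 ≤ x → 0 < x := fun x hx =>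
    lt_of_lt_of_le (Real.exp_pos 1) (ht0e x hx)
  have hlog1 : ∀ x : ℝ, t0 ≤ x → 1 ≤ Real.log x := by
    intro x hx
    exact (Real.le_log_iff_exp_le (hxpos x hx)).2 (ht0e x hx)
  have hlogκ1 : ∀ x : ℝ, t0 ≤ x → 1 ≤ Real.log x ^ κ := by
    intro x hx
    calc (1:ℝ) = 1 ^ κ := (Real.one_rpow κ).symm
    _ ≤ Real.log x ^ κ := Real.rpow_le_rpow zero_le_one (hlog1 x hx) hκ.le
  -- pointwise positivity of densities
  have hfXpos : ∀ x : ℝ, t0 ≤ x → αX / 2 * (gX x / x) ≤ fX x := by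
    intro x hx
    rw [hfX_id x (hxpos x hx)]
    have h1 : |eX x| ≤ αX / 2 := (ht0 x hx).2.2.2.1
    have h2 : 0 < gX x / x := div_pos (hgXpos x (hxpos x hx)) (hxpos x hx)
    have h3 : αX / 2 ≤ αX - eX x := by
      have := abs_le.1 h1
      linarith [this.1, this.2]
    nlinarith
  have hfYpos : ∀ x : ℝ, t0 ≤ x → αY / 2 * (gY x / x) ≤ fY x := by
    intro x hx
    rw [hfY_id x (hxpos x hx)]
    have h1 : |eY x| ≤ αY / 2 := (ht0 x hx).2.2.2.2.1
    have h2 : 0 < gY x / x := div_pos (hgYpos x (hxpos x hx)) (hxpos x hx)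
    have h3 : αY / 2 ≤ αY - eY x := by
      have := abs_le.1 h1
      linarith [this.1, this.2]
    nlinarith
  have hfXnn : ∀ x : ℝ, t0 ≤ x → 0 ≤ fX x := by
    intro x hx
    refine le_trans ?_ (hfXpos x hx)
    have := hxpos x hx
    have := hgXpos x this
    positivity
  have hfYnn : ∀ x : ℝ, t0 ≤ x → 0 ≤ fY x := by
    intro x hx
    refine le_trans ?_ (hfYpos x hx)
    have := hxpos x hx
    have := hgYpos x this
    positivity
  -- FTC facts
  have hFTCY : ∀ a : ℝ, t0 ≤ a →
      IntegrableOn fY (Set.Ioi a) volume ∧ (∫ s in Set.Ioi a, fY s) = gY a := by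
    intro a ha
    have ha0 : 0 < a := hxpos a ha
    have hder : ∀ x ∈ Set.Ici a, HasDerivAt (fun s => -gY s) (fY x) x := by
      intro x hx
      have hx0 : 0 < x := ha0.trans_le hx
      have h1 := (hDY x hx0).neg
      rw [hfY_eq x hx0]
      exact h1
    have hpos : ∀ x ∈ Set.Ioi a, 0 ≤ fY x := fun x hx =>
      hfYnn x (ha.trans (le_of_lt hx))
    have htd : Tendsto (fun s => -gY s) atTop (nhds 0) := by
      have := htendY.neg; simpa using this
    refine ⟨integrableOn_Ioi_deriv_of_nonneg' hder hpos htd, ?_⟩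
    have := integral_Ioi_of_hasDerivAt_of_nonneg' hder hpos htd
    simpa using this
  have hFTCsum : ∀ a : ℝ, t0 ≤ a →
      IntegrableOn (fun s => fX s * gY s + fY s * gX s) (Set.Ioi a) volume ∧
        (∫ s in Set.Ioi a, (fX s * gY s + fY s * gX s)) = gX a * gY a := by
    intro a ha
    have ha0 : 0 < a := hxpos a ha
    have hder : ∀ x ∈ Set.Ici a,
        HasDerivAt (fun s => -(gX s * gY s)) (fX x * gY x + fY x * gX x) x := by
      intro x hx
      have hx0 : 0 < x := ha0.trans_le hx
      have h1 := ((hDX x hx0).mul (hDY x hx0)).neg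
      refine h1.congr_deriv (Eq.symm ?_)
      rw [hfX_eq x hx0, hfY_eq x hx0]
      show _ = -((deriv LX x * x ^ (-αX) + LX x * (-αX * x ^ (-αX - 1))) * (LY x * x ^ (-αY))
        + (LX x * x ^ (-αX)) * (deriv LY x * x ^ (-αY) + LY x * (-αY * x ^ (-αY - 1))))
      show -(deriv LX x * x ^ (-αX) + LX x * (-αX * x ^ (-αX - 1))) * (LY x * x ^ (-αY))
        + -(deriv LY x * x ^ (-αY) + LY x * (-αY * x ^ (-αY - 1))) * (LX x * x ^ (-αX)) = _
      ring
    have hpos : ∀ x ∈ Set.Ioi a, 0 ≤ fX x * gY x + fY x * gX x := by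
      intro x hx
      have hx' : t0 ≤ x := ha.trans (le_of_lt hx)
      have hx0 : 0 < x := hxpos x hx'
      exact add_nonneg (mul_nonneg (hfXnn x hx') (hgYpos x hx0).le)
        (mul_nonneg (hfYnn x hx') (hgXpos x hx0).le)
    have htd : Tendsto (fun s => -(gX s * gY s)) atTop (nhds 0) := by
      have := (htendX.mul htendY).neg; simpa using this
    refine ⟨integrableOn_Ioi_deriv_of_nonneg' hder hpos htd, ?_⟩
    have := integral_Ioi_of_hasDerivAt_of_nonneg' hder hpos htd
    simpa using this
  -- measurability of densities
  have hfYm : Measurable fY := (measurable_deriv gY).neg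
  have hfXm : Measurable fX := (measurable_deriv gX).neg
  have hgXae : ∀ a : ℝ, 0 < a → AEStronglyMeasurable gX (volume.restrict (Set.Ioi a)) :=
    fun a ha => (hgXc.mono (Set.Ioi_subset_Ioi ha.le)).aestronglyMeasurable measurableSet_Ioi
  have hgYae : ∀ a : ℝ, 0 < a → AEStronglyMeasurable gY (volume.restrict (Set.Ioi a)) :=
    fun a ha => (hgYc.mono (Set.Ioi_subset_Ioi ha.le)).aestronglyMeasurable measurableSet_Ioi
  -- main identity
  have hMain : ∀ t : ℝ, t0 ≤ t →
      (μ {ω | X ω ≤ Y ω ∧ t ≤ min (X ω) (Y ω)}).toReal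
        = ∫ s in Set.Ioi t, fY s * (gX t - gX s) := by
    intro t ht
    have htp : 0 < t := hxpos t ht
    set ν := μ.map X with hν_def
    set ρ := μ.map Y with hρ_def
    haveI : IsProbabilityMeasure ν := Measure.isProbabilityMeasure_map hXm.aemeasurable
    haveI : IsProbabilityMeasure ρ := Measure.isProbabilityMeasure_map hYm.aemeasurable
    have hν_Ici : ∀ x : ℝ, 0 < x → ν (Set.Ici x) = ENNReal.ofReal (gX x) :=
      aux_map_Ici μ X gX hXm hgXc hXtail
    have hρ_Ici : ∀ x : ℝ, 0 < x → ρ (Set.Ici x) = ENNReal.ofReal (gY x) :=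
      aux_map_Ici μ Y gY hYm hgYc hYtail
    have hSm : MeasurableSet {p : ℝ × ℝ | t ≤ p.1 ∧ p.1 ≤ p.2} := by
      have h1 : {p : ℝ × ℝ | t ≤ p.1 ∧ p.1 ≤ p.2}
          = {p : ℝ × ℝ | t ≤ p.1} ∩ {p : ℝ × ℝ | p.1 ≤ p.2} := rfl
      rw [h1]
      exact (measurableSet_le measurable_const measurable_fst).inter
        (measurableSet_le measurable_fst measurable_snd)
    have hA1 : μ {ω | X ω ≤ Y ω ∧ t ≤ min (X ω) (Y ω)}
        = (ν.prod ρ) {p : ℝ × ℝ | t ≤ p.1 ∧ p.1 ≤ p.2} := by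
      have hset : {ω | X ω ≤ Y ω ∧ t ≤ min (X ω) (Y ω)}
          = (fun ω => (X ω, Y ω)) ⁻¹' {p : ℝ × ℝ | t ≤ p.1 ∧ p.1 ≤ p.2} := by
        ext ω
        simp only [Set.mem_setOf_eq, Set.mem_preimage, le_min_iff]
        constructor
        · rintro ⟨h1, h2, h3⟩; exact ⟨h2, h1⟩
        · rintro ⟨h1, h2⟩; exact ⟨h2, h1, h1.trans h2⟩
      rw [hset, ← Measure.map_apply (hXm.prodMk hYm) hSm,
        (indepFun_iff_map_prod_eq_prod_map_map hXm.aemeasurable hYm.aemeasurable).1 hindep]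
    set F : ℝ × ℝ → ENNReal :=
      fun p => if t ≤ p.1 ∧ p.1 < p.2 then ENNReal.ofReal (fY p.2) else 0 with hF_def
    have hFm : Measurable F := by
      have h1 : MeasurableSet {p : ℝ × ℝ | t ≤ p.1 ∧ p.1 < p.2} := by
        have h2 : {p : ℝ × ℝ | t ≤ p.1 ∧ p.1 < p.2}
            = {p : ℝ × ℝ | t ≤ p.1} ∩ {p : ℝ × ℝ | p.1 < p.2} := rfl
        rw [h2]
        exact (measurableSet_le measurable_const measurable_fst).inter
          (measurableSet_lt measurable_fst measurable_snd)
      exact Measurable.ite h1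
        (ENNReal.measurable_ofReal.comp (hfYm.comp measurable_snd)) measurable_const
    have hA2 : (ν.prod ρ) {p : ℝ × ℝ | t ≤ p.1 ∧ p.1 ≤ p.2}
        = ∫⁻ x, ∫⁻ s, F (x, s) ∂volume ∂ν := by
      rw [Measure.prod_apply hSm]
      apply lintegral_congr
      intro x
      by_cases hx : t ≤ x
      · have hpre : Prod.mk x ⁻¹' {p : ℝ × ℝ | t ≤ p.1 ∧ p.1 ≤ p.2} = Set.Ici x := by
          ext y; simp [hx]
        rw [hpre, hρ_Ici x (htp.trans_le hx)]
        have hFx : ∀ s : ℝ, F (x, s)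
            = (Set.Ioi x).indicator (fun s => ENNReal.ofReal (fY s)) s := by
          intro s
          by_cases hs : x < s
          · rw [Set.indicator_of_mem (Set.mem_Ioi.2 hs), hF_def]
            simp only
            rw [if_pos ⟨hx, hs⟩]
          · rw [Set.indicator_of_notMem (by simpa using hs), hF_def]
            simp only
            rw [if_neg (fun h => hs h.2)]
        rw [lintegral_congr hFx, lintegral_indicator measurableSet_Ioi,
          ← (hFTCY x (ht.trans hx)).2]
        exact ofReal_integral_eq_lintegral_ofReal (hFTCY x (ht.trans hx)).1
          ((ae_restrict_iff' measurableSet_Ioi).2 (ae_of_all _ fun s hs =>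
            hfYnn s (le_trans (ht.trans hx) (le_of_lt hs))))
      · have hpre : Prod.mk x ⁻¹' {p : ℝ × ℝ | t ≤ p.1 ∧ p.1 ≤ p.2} = (∅ : Set ℝ) := by
          ext y; simp [hx]
        have hFx : ∀ s : ℝ, F (x, s) = 0 := by
          intro s; rw [hF_def]; simp only; rw [if_neg (fun h => hx h.1)]
        rw [hpre]
        simp [hFx]
    have hswap : ∫⁻ x, ∫⁻ s, F (x, s) ∂volume ∂ν = ∫⁻ s, ∫⁻ x, F (x, s) ∂ν ∂volume :=
      lintegral_lintegral_swap hFm.aemeasurable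
    have hA3 : ∫⁻ s, ∫⁻ x, F (x, s) ∂ν ∂volume
        = ∫⁻ s in Set.Ioi t, ENNReal.ofReal (fY s * (gX t - gX s)) ∂volume := by
      rw [← lintegral_indicator measurableSet_Ioi]
      apply lintegral_congr
      intro s
      by_cases hs : t < s
      · have hFx : ∀ x : ℝ, F (x, s)
            = (Set.Ico t s).indicator (fun _ => ENNReal.ofReal (fY s)) x := by
          intro x
          by_cases h : t ≤ x ∧ x < s
          · rw [Set.indicator_of_mem (Set.mem_Ico.2 h), hF_def]
            simp only
            rw [if_pos h]
          · rw [Set.indicator_of_notMem (by simpa [Set.mem_Ico] using h), hF_def]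
            simp only
            rw [if_neg h]
        have hνIco : ν (Set.Ico t s) = ENNReal.ofReal (gX t - gX s) := by
          have hd : Disjoint (Set.Ico t s) (Set.Ici s) :=
            (Set.Iio_disjoint_Ici le_rfl).mono_left Set.Ico_subset_Iio_self
          have hu : ν (Set.Ici t) = ν (Set.Ico t s) + ν (Set.Ici s) := by
            rw [← measure_union hd measurableSet_Ici, Set.Ico_union_Ici_eq_Ici hs.le]
          rw [hν_Ici t htp, hν_Ici s (htp.trans hs)] at hu
          rw [ENNReal.ofReal_sub _ (hgXpos s (htp.trans hs)).le]
          exact ENNReal.eq_sub_of_add_eq ENNReal.ofReal_ne_top hu.symm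
        rw [lintegral_congr hFx, lintegral_indicator_const measurableSet_Ico, hνIco,
          Set.indicator_of_mem (Set.mem_Ioi.2 hs),
          ← ENNReal.ofReal_mul (hfYnn s (le_trans ht hs.le))]
      · have hFx : ∀ x : ℝ, F (x, s) = 0 := by
          intro x; rw [hF_def]; simp only
          rw [if_neg (fun h => hs (lt_of_le_of_lt h.1 h.2))]
        rw [Set.indicator_of_notMem (by simpa using hs)]
        simp [hFx]
    have hnn : ∀ᵐ s ∂(volume.restrict (Set.Ioi t)), 0 ≤ fY s * (gX t - gX s) :=
      (ae_restrict_iff' measurableSet_Ioi).2 (ae_of_all _ fun s hs =>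
        mul_nonneg (hfYnn s (le_trans ht (le_of_lt hs)))
          (sub_nonneg.2 (hgX_anti t s htp (le_of_lt hs))))
    have hInt : IntegrableOn (fun s => fY s * (gX t - gX s)) (Set.Ioi t) volume := by
      apply Integrable.mono' (hFTCY t ht).1
      · exact hfYm.aestronglyMeasurable.restrict.mul
          (aestronglyMeasurable_const.sub (hgXae t htp))
      · refine (ae_restrict_iff' measurableSet_Ioi).2 (ae_of_all _ fun s hs => ?_)
        have hs0 : 0 < s := htp.trans hs
        have h1 : 0 ≤ fY s := hfYnn s (le_trans ht (le_of_lt hs))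
        have h2 : 0 ≤ gX t - gX s := sub_nonneg.2 (hgX_anti t s htp (le_of_lt hs))
        have h3 : gX t - gX s ≤ 1 := by
          have := hgXpos s hs0
          have := hgXle1 t htp
          linarith
        rw [Real.norm_eq_abs, abs_of_nonneg (mul_nonneg h1 h2)]
        nlinarith
    rw [hA1, hA2, hswap, hA3, ← ofReal_integral_eq_lintegral_ofReal hInt hnn,
      ENNReal.toReal_ofReal (integral_nonneg_of_ae hnn)]
  -- the constant
  refine ⟨2 * c₂ / (αX + αY) ^ 2, ?_⟩
  filter_upwards [eventually_ge_atTop t0] with t ht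
  have htp : 0 < t := hxpos t ht
  have hlogt : 1 ≤ Real.log t ^ κ := hlogκ1 t ht
  have hlogtpos : 0 < Real.log t ^ κ := lt_of_lt_of_le one_pos hlogt
  have hγ : γY / (γX + γY) = αX / (αX + αY) := by
    rw [hγX, hγY]
    field_simp
    exact add_comm _ _
  have hPZ' : ∀ x : ℝ, PZ x = gX x * gY x := fun x => hPZ x
  set Sm : ℝ → ℝ := fun s => fX s * gY s + fY s * gX s with hSm_def
  obtain ⟨hSmInt, hSmVal⟩ := hFTCsum t ht
  obtain ⟨hYInt, hYVal⟩ := hFTCY t ht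
  have hI2 : IntegrableOn (fun s => fY s * gX s) (Set.Ioi t) volume := by
    apply Integrable.mono' hYInt
    · exact hfYm.aestronglyMeasurable.restrict.mul (hgXae t htp)
    · refine (ae_restrict_iff' measurableSet_Ioi).2 (ae_of_all _ fun s hs => ?_)
      have hs0 : 0 < s := htp.trans hs
      have h1 : 0 ≤ fY s := hfYnn s (le_trans ht (le_of_lt hs))
      have h2 : 0 ≤ gX s := (hgXpos s hs0).le
      have h3 : gX s ≤ 1 := hgXle1 s hs0
      rw [Real.norm_eq_abs, abs_of_nonneg (mul_nonneg h1 h2)]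
      nlinarith
  have hI1 : IntegrableOn (fun s => fX s * gY s) (Set.Ioi t) volume := by
    apply (hSmInt.sub hI2).congr
    refine ae_of_all _ fun s => ?_
    show (fX s * gY s + fY s * gX s) - fY s * gX s = fX s * gY s
    ring
  set ψ : ℝ → ℝ := fun s => (αY * (fX s * gY s) - αX * (fY s * gX s)) / (αX + αY) with hψ_def
  have hψInt : IntegrableOn ψ (Set.Ioi t) volume := by
    apply (((hI1.const_mul αY).sub (hI2.const_mul αX)).div_const (αX + αY)).congr
    exact ae_of_all _ fun s => rfl
  have hEq1 : (μ {ω | X ω ≤ Y ω ∧ t ≤ min (X ω) (Y ω)}).toReal - γY / (γX + γY) * PZ t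
      = ∫ s in Set.Ioi t, ψ s := by
    rw [hMain t ht, hγ, hPZ' t]
    have e0 : (fun s => fY s * (gX t - gX s)) = fun s => gX t * fY s - fY s * gX s :=
      funext fun s => by ring
    have e1 : ∫ s in Set.Ioi t, fY s * (gX t - gX s)
        = gX t * (∫ s in Set.Ioi t, fY s) - ∫ s in Set.Ioi t, fY s * gX s := by
      rw [e0, integral_sub (hYInt.const_mul (gX t)) hI2, integral_const_mul]
    rw [e1, hYVal]
    have e2 : ∫ s in Set.Ioi t, ψ s
        = αY / (αX + αY) * (∫ s in Set.Ioi t, Sm s) - ∫ s in Set.Ioi t, fY s * gX s := by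
      rw [← integral_const_mul, ← integral_sub (hSmInt.const_mul _) hI2]
      apply integral_congr_ae
      refine ae_of_all _ fun s => ?_
      simp only [hψ_def, hSm_def]
      field_simp
      ring
    rw [e2, hSmVal]
    field_simp
    ring
  have hbound : ∀ s ∈ Set.Ioi t, |ψ s| ≤ 2 * c₂ / (αX + αY) ^ 2 / Real.log t ^ κ * Sm s := by
    intro s hs
    have hst : t ≤ s := le_of_lt hs
    have hs' : t0 ≤ s := ht.trans hst
    have hs0 : 0 < s := hxpos s hs'
    obtain ⟨he, hX1, hY1, hX2, hY2, hXY⟩ := ht0 s hs'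
    have hfx : fX s * gY s = gX s * gY s / s * (αX - eX s) := by
      rw [hfX_id s hs0]; ring
    have hfy : fY s * gX s = gX s * gY s / s * (αY - eY s) := by
      rw [hfY_id s hs0]; ring
    have hgXs := hgXpos s hs0
    have hgYs := hgYpos s hs0
    have hq : 0 ≤ gX s * gY s / s := by positivity
    have hls : Real.log t ^ κ ≤ Real.log s ^ κ :=
      Real.rpow_le_rpow (le_trans zero_le_one (hlog1 t ht))
        ((Real.log_le_log_iff htp hs0).2 hst) hκ.le
    have hCX0 : 0 ≤ CX := abs_nonneg _
    have hCY0 : 0 ≤ CY := abs_nonneg _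
    have hX1' : |eX s| ≤ CX / Real.log t ^ κ := by
      refine le_trans hX1 ?_
      gcongr
    have hY1' : |eY s| ≤ CY / Real.log t ^ κ := by
      refine le_trans hY1 ?_
      gcongr
    have habs : |αX * eY s - αY * eX s| ≤ c₂ / Real.log t ^ κ := by
      calc |αX * eY s - αY * eX s| ≤ |αX * eY s| + |αY * eX s| := abs_sub _ _
        _ = αX * |eY s| + αY * |eX s| := by
            rw [abs_mul, abs_mul, abs_of_pos hαX, abs_of_pos hαY]
        _ ≤ αX * (CY / Real.log t ^ κ) + αY * (CX / Real.log t ^ κ) :=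
            add_le_add (mul_le_mul_of_nonneg_left hY1' hαX.le)
              (mul_le_mul_of_nonneg_left hX1' hαY.le)
        _ = c₂ / Real.log t ^ κ := by rw [hc2_def]; ring
    have hψs : ψ s = gX s * gY s / s * (αX * eY s - αY * eX s) / (αX + αY) := by
      simp only [hψ_def]
      rw [hfx, hfy]
      field_simp
      ring
    have hSml : (αX + αY) / 2 * (gX s * gY s / s) ≤ Sm s := by
      simp only [hSm_def]
      rw [hfx, hfy]
      have h2 := abs_le.1 hX2
      have h3 := abs_le.1 hY2
      have h4 := abs_add_le (eX s) (eY s)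
      have h5 : eX s + eY s ≤ (αX + αY) / 2 := by
        have := le_abs_self (eX s)
        have := le_abs_self (eY s)
        linarith
      nlinarith
    have hSq : gX s * gY s / s ≤ 2 / (αX + αY) * Sm s := by
      rw [div_mul_eq_mul_div, le_div_iff₀ hA]
      nlinarith
    have hc2t : 0 ≤ c₂ / Real.log t ^ κ := by positivity
    calc |ψ s| = gX s * gY s / s * |αX * eY s - αY * eX s| / (αX + αY) := by
          rw [hψs, abs_div, abs_mul, abs_of_nonneg hq, abs_of_pos hA]
      _ ≤ (2 / (αX + αY) * Sm s) * (c₂ / Real.log t ^ κ) / (αX + αY) := by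
          have hSm0 : 0 ≤ Sm s := le_trans (mul_nonneg (by positivity) hq) hSml
          have h6 : gX s * gY s / s * |αX * eY s - αY * eX s|
              ≤ (2 / (αX + αY) * Sm s) * (c₂ / Real.log t ^ κ) :=
            mul_le_mul hSq habs (abs_nonneg _) (mul_nonneg (by positivity) hSm0)
          gcongr
      _ = 2 * c₂ / (αX + αY) ^ 2 / Real.log t ^ κ * Sm s := by
          field_simp
  rw [hEq1]
  calc |∫ s in Set.Ioi t, ψ s| ≤ ∫ s in Set.Ioi t, |ψ s| := by
        simpa [Real.norm_eq_abs] using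
          norm_integral_le_integral_norm (μ := volume.restrict (Set.Ioi t)) ψ
    _ ≤ ∫ s in Set.Ioi t, 2 * c₂ / (αX + αY) ^ 2 / Real.log t ^ κ * Sm s := by
        apply integral_mono_of_nonneg (ae_of_all _ fun s => abs_nonneg _)
          (hSmInt.const_mul _)
        refine (ae_restrict_iff' measurableSet_Ioi).2 (ae_of_all _ fun s hs => ?_)
        exact hbound s hs
    _ = 2 * c₂ / (αX + αY) ^ 2 / Real.log t ^ κ * (gX t * gY t) := by
        rw [integral_const_mul, hSmVal]
    _ = 2 * c₂ / (αX + αY) ^ 2 / Real.log t ^ κ * PZ t := by rw [hPZ' t]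
end

section
/- For the empirical tail process, with P_Z(t(n)) ≥ 2s(n) for all large n and any m ≥ 2, ‖(P_Z(t(n))/p̂(t(n))) 1_{p̂(t(n)) ≥ s(n)} − 1‖_m = O(1/(s(n)√n)) + O(1/(P_Z(t(n))√n)); in particular ‖(P_Z(t(n))/p̂(t(n))) 1_{p̂(t(n)) ≥ s(n)}‖_m = O(1). -/
open Filter Asymptotics MeasureTheory ProbabilityTheory Real

section Aux
open Finset

lemma count_image_card (k n j : ℕ) :
    ((Fintype.piFinset (fun _ : Fin k => Finset.range n)).filter
      (fun f => (Finset.image f Finset.univ).card = j)).card ≤ n.choose j * j ^ k := by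
  classical
  have hsub : ((Fintype.piFinset (fun _ : Fin k => Finset.range n)).filter
      (fun f => (Finset.image f Finset.univ).card = j)) ⊆
      ((Finset.range n).powersetCard j).biUnion
        (fun T => Fintype.piFinset (fun _ : Fin k => T)) := by
    intro f hf
    simp only [mem_filter, Fintype.mem_piFinset] at hf
    refine Finset.mem_biUnion.2 ⟨Finset.image f Finset.univ, ?_, ?_⟩
    · exact Finset.mem_powersetCard.2 ⟨fun x hx => by
        obtain ⟨i, _, rfl⟩ := Finset.mem_image.1 hx; exact hf.1 i, hf.2⟩
    · exact Fintype.mem_piFinset.2 fun i => Finset.mem_image_of_mem f (mem_univ i)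
  calc _ ≤ (((Finset.range n).powersetCard j).biUnion
        (fun T => Fintype.piFinset (fun _ : Fin k => T))).card := Finset.card_le_card hsub
    _ ≤ ∑ T ∈ (Finset.range n).powersetCard j, (Fintype.piFinset (fun _ : Fin k => T)).card :=
        Finset.card_biUnion_le
    _ ≤ ∑ T ∈ (Finset.range n).powersetCard j, j ^ k := by
        refine Finset.sum_le_sum fun T hT => ?_
        have hTc : T.card = j := (Finset.mem_powersetCard.1 hT).2
        rw [Fintype.card_piFinset]
        simp [hTc]
    _ = n.choose j * j ^ k := by
        rw [Finset.sum_const, Finset.card_powersetCard, Finset.card_range, smul_eq_mul]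

variable {Ω : Type*} [MeasurableSpace Ω] {μ : MeasureTheory.Measure Ω} [IsProbabilityMeasure μ]

lemma intble_of_bdd {f : Ω → ℝ} (hf : Measurable f) {C : ℝ} (h : ∀ ω, |f ω| ≤ C) :
    Integrable f μ :=
  (integrable_const C).mono' hf.aestronglyMeasurable
    (Filter.Eventually.of_forall (fun ω => by simpa [Real.norm_eq_abs] using h ω))

lemma integral_prod_indep (W : ℕ → Ω → ℝ)
    (hW : iIndepFun W μ)
    (hmeas : ∀ i, Measurable (W i)) (hbdd : ∀ i ω, |W i ω| ≤ 1) (T : Finset ℕ) :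
    ∫ ω, ∏ i ∈ T, W i ω ∂μ = ∏ i ∈ T, ∫ ω, W i ω ∂μ := by
  classical
  induction T using Finset.induction_on with
  | empty => simp
  | @insert a s ha ih =>
    have hprod_bdd : ∀ ω, |∏ i ∈ s, W i ω| ≤ 1 := by
      intro ω
      calc |∏ i ∈ s, W i ω| = ∏ i ∈ s, |W i ω| := by rw [Finset.abs_prod]
        _ ≤ ∏ i ∈ s, 1 := Finset.prod_le_prod (fun i _ => abs_nonneg _) (fun i _ => hbdd i ω)
        _ = 1 := Finset.prod_const_one
    have hprod_meas : Measurable (fun ω => ∏ i ∈ s, W i ω) :=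
      Finset.measurable_prod s (fun i _ => hmeas i)
    have hindep : IndepFun (fun ω => ∏ i ∈ s, W i ω) (W a) μ := by
      have h := hW.indepFun_finsetProd_of_notMem hmeas ha
      have : (∏ j ∈ s, W j) = fun ω => ∏ i ∈ s, W i ω := funext fun ω => Finset.prod_apply ω s W
      rwa [this] at h
    have h1 : Integrable (fun ω => ∏ i ∈ s, W i ω) μ := intble_of_bdd hprod_meas hprod_bdd
    have h2 : Integrable (W a) μ := intble_of_bdd (hmeas a) (hbdd a)
    rw [Finset.prod_insert ha]
    have : ∫ ω, W a ω * ∏ i ∈ s, W i ω ∂μ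
        = (∫ ω, W a ω ∂μ) * ∫ ω, ∏ i ∈ s, W i ω ∂μ := by
      have := (hindep.symm).integral_fun_mul_eq_mul_integral h2.aestronglyMeasurable h1.aestronglyMeasurable
      simpa using this
    simp only [Finset.prod_insert ha] at *
    rw [show (∫ ω, W a ω * ∏ i ∈ s, W i ω ∂μ) = (∫ ω, W a ω ∂μ) * ∫ ω, ∏ i ∈ s, W i ω ∂μ
      from this, ih]

lemma moment_bound (n ℓ : ℕ) (ξ : ℕ → Ω → ℝ)
    (hind : iIndepFun ξ μ)
    (hmeas : ∀ i, Measurable (ξ i)) (hbdd : ∀ i ω, |ξ i ω| ≤ 1)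
    (hmean : ∀ i, ∫ ω, ξ i ω ∂μ = 0) (v : ℝ) (hv : 0 ≤ v)
    (hvar : ∀ i, ∫ ω, (ξ i ω)^2 ∂μ ≤ v) :
    ∫ ω, (∑ i ∈ Finset.range n, ξ i ω)^(2*ℓ) ∂μ
      ≤ ∑ j ∈ Finset.range (ℓ+1), (n.choose j : ℝ) * (j:ℝ)^(2*ℓ) * v^j := by
  set k := 2*ℓ with hk
  set P := Fintype.piFinset (fun _ : Fin k => Finset.range n) with hP
  -- expand the power
  have expand : ∀ ω, (∑ i ∈ Finset.range n, ξ i ω)^k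
      = ∑ f ∈ P, ∏ i : Fin k, ξ (f i) ω := by
    intro ω
    calc (∑ i ∈ Finset.range n, ξ i ω)^k
        = ∏ _i : Fin k, (∑ i ∈ Finset.range n, ξ i ω) := by
          simp [Finset.prod_const]
      _ = ∑ f ∈ P, ∏ i : Fin k, ξ (f i) ω := Finset.prod_univ_sum _ _
  have hPbdd : ∀ (f : Fin k → ℕ) ω, |∏ i : Fin k, ξ (f i) ω| ≤ 1 := by
    intro f ω
    calc |∏ i : Fin k, ξ (f i) ω| = ∏ i : Fin k, |ξ (f i) ω| := by rw [Finset.abs_prod]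
      _ ≤ ∏ _i : Fin k, 1 :=
          Finset.prod_le_prod (fun i _ => abs_nonneg _) (fun i _ => hbdd _ ω)
      _ = 1 := Finset.prod_const_one
  have hPmeas : ∀ (f : Fin k → ℕ), Measurable fun ω => ∏ i : Fin k, ξ (f i) ω :=
    fun f => Finset.measurable_prod _ (fun i _ => hmeas (f i))
  have hswap : ∫ ω, (∑ i ∈ Finset.range n, ξ i ω)^k ∂μ
      = ∑ f ∈ P, ∫ ω, ∏ i : Fin k, ξ (f i) ω ∂μ := by
    simp_rw [expand]
    exact integral_finset_sum _ (fun f _ => intble_of_bdd (hPmeas f) (hPbdd f))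
  -- fiber counts
  set c : (Fin k → ℕ) → ℕ → ℕ :=
    fun f b => (Finset.univ.filter fun i : Fin k => f i = b).card with hc
  have hgroup : ∀ (f : Fin k → ℕ) ω,
      ∏ i : Fin k, ξ (f i) ω = ∏ b ∈ Finset.image f Finset.univ, (ξ b ω)^(c f b) := by
    intro f ω
    rw [← Finset.prod_fiberwise_of_maps_to
      (fun i _ => Finset.mem_image_of_mem f (Finset.mem_univ i)) (fun i => ξ (f i) ω)]
    refine Finset.prod_congr rfl fun b _ => ?_
    rw [Finset.prod_congr rfl (fun i hi => ?_), Finset.prod_const]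
    exact congrArg (fun x => ξ x ω) (Finset.mem_filter.1 hi).2
  have hfact : ∀ (f : Fin k → ℕ),
      ∫ ω, ∏ i : Fin k, ξ (f i) ω ∂μ
        = ∏ b ∈ Finset.image f Finset.univ, ∫ ω, (ξ b ω)^(c f b) ∂μ := by
    intro f
    simp_rw [hgroup f]
    refine integral_prod_indep (fun b ω => (ξ b ω)^(c f b)) ?_ ?_ ?_ _
    · have := hind.comp (fun b (x : ℝ) => x ^ (c f b))
        (fun b => measurable_id.pow_const (c f b))
      exact this
    · exact fun b => (hmeas b).pow_const (c f b)
    · intro b ω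
      rw [abs_pow]
      exact pow_le_one₀ (abs_nonneg _) (hbdd b ω)
  have hfiber_pos : ∀ (f : Fin k → ℕ) b, b ∈ Finset.image f Finset.univ → 1 ≤ c f b := by
    intro f b hb
    obtain ⟨i, _, rfl⟩ := Finset.mem_image.1 hb
    exact Finset.card_pos.2 ⟨i, Finset.mem_filter.2 ⟨Finset.mem_univ i, rfl⟩⟩
  have hgood_le : ∀ (f : Fin k → ℕ), (∀ b ∈ Finset.image f Finset.univ, 2 ≤ c f b) →
      (Finset.image f Finset.univ).card ≤ ℓ := by
    intro f hf2
    have hsum : ∑ b ∈ Finset.image f Finset.univ, c f b = k := by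
      have := Finset.card_eq_sum_card_fiberwise
        (fun i (_ : i ∈ (Finset.univ : Finset (Fin k))) =>
          Finset.mem_image_of_mem f (Finset.mem_univ i))
      simpa [hc] using this.symm
    have h2 : 2 * (Finset.image f Finset.univ).card ≤ k := by
      calc 2 * (Finset.image f Finset.univ).card
          = ∑ _b ∈ Finset.image f Finset.univ, 2 := by
            rw [Finset.sum_const, smul_eq_mul, mul_comm]
        _ ≤ ∑ b ∈ Finset.image f Finset.univ, c f b := Finset.sum_le_sum hf2
        _ = k := hsum
    omega
  have hterm : ∀ (f : Fin k → ℕ),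
      |∫ ω, ∏ i : Fin k, ξ (f i) ω ∂μ|
        ≤ if (Finset.image f Finset.univ).card ≤ ℓ
          then v ^ (Finset.image f Finset.univ).card else 0 := by
    intro f
    rw [hfact f]
    by_cases hgood : ∀ b ∈ Finset.image f Finset.univ, 2 ≤ c f b
    · rw [if_pos (hgood_le f hgood)]
      calc |∏ b ∈ Finset.image f Finset.univ, ∫ ω, (ξ b ω)^(c f b) ∂μ|
          = ∏ b ∈ Finset.image f Finset.univ, |∫ ω, (ξ b ω)^(c f b) ∂μ| := by
            rw [Finset.abs_prod]
        _ ≤ ∏ _b ∈ Finset.image f Finset.univ, v := by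
            refine Finset.prod_le_prod (fun b _ => abs_nonneg _) (fun b hb => ?_)
            have h1 : |∫ ω, (ξ b ω)^(c f b) ∂μ| ≤ ∫ ω, |(ξ b ω)^(c f b)| ∂μ := by
              simpa [Real.norm_eq_abs] using
                norm_integral_le_integral_norm (μ := μ) (f := fun ω => (ξ b ω)^(c f b))
            refine h1.trans ?_
            have h2 : ∀ ω, |(ξ b ω)^(c f b)| ≤ (ξ b ω)^2 := by
              intro ω
              rw [abs_pow, ← sq_abs]
              exact pow_le_pow_of_le_one (abs_nonneg _) (hbdd b ω) (hgood b hb)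
            refine le_trans (integral_mono ?_ ?_ h2) (hvar b)
            · exact intble_of_bdd ((hmeas b).pow_const _).abs
                (C := 1) (fun ω => by
                  rw [abs_abs, abs_pow]; exact pow_le_one₀ (abs_nonneg _) (hbdd b ω))
            · exact intble_of_bdd ((hmeas b).pow_const 2)
                (C := 1) (fun ω => by
                  rw [abs_pow]; exact pow_le_one₀ (abs_nonneg _) (hbdd b ω))
        _ = v ^ (Finset.image f Finset.univ).card := Finset.prod_const v
    · push_neg at hgood
      obtain ⟨b, hb, hb2⟩ := hgood
      have hcb : c f b = 1 := le_antisymm (by omega) (hfiber_pos f b hb)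
      have hz : (∫ ω, (ξ b ω)^(c f b) ∂μ) = 0 := by
        rw [hcb]; simpa using hmean b
      rw [Finset.prod_eq_zero hb hz, abs_zero]
      split
      · exact pow_nonneg hv _
      · exact le_refl 0
  have hsplit : ∀ (f : Fin k → ℕ),
      (if (Finset.image f Finset.univ).card ≤ ℓ
        then v ^ (Finset.image f Finset.univ).card else 0)
      = ∑ j ∈ Finset.range (ℓ+1),
          (if (Finset.image f Finset.univ).card = j then v ^ j else 0) := by
    intro f
    by_cases h : (Finset.image f Finset.univ).card ≤ ℓ
    · rw [if_pos h, Finset.sum_ite_eq, if_pos (Finset.mem_range.2 (by omega))]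
    · rw [if_neg h, Finset.sum_eq_zero]
      intro j hj
      rw [if_neg]
      have := Finset.mem_range.1 hj
      omega
  rw [hswap]
  calc ∑ f ∈ P, ∫ ω, ∏ i : Fin k, ξ (f i) ω ∂μ
      ≤ ∑ f ∈ P, |∫ ω, ∏ i : Fin k, ξ (f i) ω ∂μ| :=
        Finset.sum_le_sum (fun f _ => le_abs_self _)
    _ ≤ ∑ f ∈ P, (if (Finset.image f Finset.univ).card ≤ ℓ
          then v ^ (Finset.image f Finset.univ).card else 0) :=
        Finset.sum_le_sum (fun f _ => hterm f)
    _ = ∑ j ∈ Finset.range (ℓ+1), ∑ f ∈ P,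
          (if (Finset.image f Finset.univ).card = j then v ^ j else 0) := by
        rw [Finset.sum_congr rfl (fun f _ => hsplit f), Finset.sum_comm]
    _ ≤ ∑ j ∈ Finset.range (ℓ+1), (n.choose j : ℝ) * (j:ℝ)^(2*ℓ) * v^j := by
        refine Finset.sum_le_sum (fun j _ => ?_)
        rw [← Finset.sum_filter]
        rw [Finset.sum_const, nsmul_eq_mul]
        have hcard : (P.filter (fun f => (Finset.image f Finset.univ).card = j)).card
            ≤ n.choose j * j ^ k := count_image_card k n j
        calc ((P.filter (fun f => (Finset.image f Finset.univ).card = j)).card : ℝ) * v ^ j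
            ≤ ((n.choose j * j ^ k : ℕ) : ℝ) * v ^ j := by
              refine mul_le_mul_of_nonneg_right ?_ (pow_nonneg hv j)
              exact_mod_cast hcard
          _ = (n.choose j : ℝ) * (j:ℝ)^(2*ℓ) * v^j := by
              push_cast [hk]; ring

lemma lyapunov (g : Ω → ℝ) (hg : Measurable g) (hg0 : ∀ ω, 0 ≤ g ω) {B : ℝ} (hB0 : 0 ≤ B)
    (hgB : ∀ ω, g ω ≤ B) {m : ℝ} (hm : 0 < m) {k : ℕ} (hmk : m < k) :
    (∫ ω, g ω ^ m ∂μ) ^ (1/m) ≤ (∫ ω, g ω ^ k ∂μ) ^ (1/(k:ℝ)) := by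
  have hk0 : (0:ℝ) < k := lt_trans hm hmk
  have hP : 1 < (k:ℝ)/m := (one_lt_div hm).2 hmk
  have hPQ : ((k:ℝ)/m).HolderConjugate (Real.conjExponent ((k:ℝ)/m)) :=
    Real.HolderConjugate.conjExponent hP
  have hmeasm : Measurable fun ω => g ω ^ m := hg.pow_const m
  have hmem1 : MemLp (fun ω => g ω ^ m) (ENNReal.ofReal ((k:ℝ)/m)) μ := by
    refine MemLp.of_bound hmeasm.aestronglyMeasurable (B ^ m) ?_
    refine Filter.Eventually.of_forall fun ω => ?_
    rw [Real.norm_eq_abs, abs_of_nonneg (Real.rpow_nonneg (hg0 ω) m)]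
    exact Real.rpow_le_rpow (hg0 ω) (hgB ω) hm.le
  have hmem2 : MemLp (fun _ : Ω => (1:ℝ)) (ENNReal.ofReal (Real.conjExponent ((k:ℝ)/m))) μ :=
    memLp_const 1
  have hHolder := integral_mul_le_Lp_mul_Lq_of_nonneg hPQ
    (Filter.Eventually.of_forall fun ω => Real.rpow_nonneg (hg0 ω) m)
    (Filter.Eventually.of_forall fun _ => zero_le_one) hmem1 hmem2
  simp only [mul_one] at hHolder
  have heq1 : ∀ ω, (g ω ^ m) ^ ((k:ℝ)/m) = g ω ^ k := by
    intro ω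
    rw [← Real.rpow_natCast (g ω) k, ← Real.rpow_mul (hg0 ω)]
    congr 1
    field_simp
  have heq2 : (∫ ω, (1:ℝ) ^ (Real.conjExponent ((k:ℝ)/m)) ∂μ) = 1 := by
    simp
  rw [heq2] at hHolder
  simp only [Real.one_rpow, mul_one] at hHolder
  have hHolder2 : ∫ ω, g ω ^ m ∂μ ≤ (∫ ω, g ω ^ k ∂μ) ^ (m/(k:ℝ)) := by
    have : (∫ ω, (g ω ^ m) ^ ((k:ℝ)/m) ∂μ) = ∫ ω, g ω ^ k ∂μ :=
      integral_congr_ae (Filter.Eventually.of_forall fun ω => heq1 ω)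
    rw [this] at hHolder
    have hexp : 1/((k:ℝ)/m) = m/(k:ℝ) := by
      field_simp
    rwa [hexp] at hHolder
  have hnn : (0:ℝ) ≤ ∫ ω, g ω ^ k ∂μ :=
    integral_nonneg fun ω => pow_nonneg (hg0 ω) k
  calc (∫ ω, g ω ^ m ∂μ) ^ (1/m)
      ≤ ((∫ ω, g ω ^ k ∂μ) ^ (m/(k:ℝ))) ^ (1/m) := by
        refine Real.rpow_le_rpow ?_ hHolder2 (by positivity)
        exact integral_nonneg fun ω => Real.rpow_nonneg (hg0 ω) m
    _ = (∫ ω, g ω ^ k ∂μ) ^ (1/(k:ℝ)) := by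
        rw [← Real.rpow_mul hnn]
        congr 1
        field_simp
end Aux

set_option maxHeartbeats 2000000 in
/-- for `Z_1,…,Z_n` i.i.d. with tail function `P_Z`,
`p̂(x) = (1/n)Σ 1_{Z_i ≥ x}`, and deterministic `t(n) → ∞`, `s(n) → 0` with
`P_Z(t(n))/2 > s(n)` for all large `n`, one has for any `m ≥ 2`:
`‖(P_Z(t(n))/p̂(t(n))) 1_{p̂(t(n)) ≥ s(n)} − 1‖_m
  = O(1/(s(n)√n)) + O(1/(P_Z(t(n))√n))`, and in particular
`‖(P_Z(t(n))/p̂(t(n))) 1_{p̂(t(n)) ≥ s(n)}‖_m = O(1)`. -/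
theorem statement10
    {Ω : Type*} [MeasurableSpace Ω] (μ : Measure Ω) [IsProbabilityMeasure μ]
    (Z : ℕ → Ω → ℝ) (hZm : ∀ i, Measurable (Z i))
    (hiid : iIndepFun Z μ)
    (hident : ∀ i, IdentDistrib (Z i) (Z 0) μ μ)
    (PZ : ℝ → ℝ) (hPZ : ∀ x : ℝ, PZ x = (μ {ω | x ≤ Z 0 ω}).toReal)
    (t s : ℕ → ℝ) (ht : Tendsto t atTop atTop) (hs : ∀ n, 0 < s n)
    (hs0 : Tendsto s atTop (nhds 0))
    (hts : ∀ᶠ n in atTop, s n < PZ (t n) / 2)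
    (phat : ℕ → Ω → ℝ)
    (hphat : ∀ n ω, phat n ω = (1 / (n : ℝ)) * ∑ i ∈ Finset.range n,
      if t n ≤ Z i ω then (1 : ℝ) else 0)
    (m : ℝ) (hm : 2 ≤ m) :
    (∃ C : ℝ, ∀ᶠ n in atTop,
      (∫ ω, |(if s n ≤ phat n ω then PZ (t n) / phat n ω else 0) - 1| ^ m ∂μ)
          ^ (1 / m) ≤
        C * (1 / (s n * Real.sqrt n) + 1 / (PZ (t n) * Real.sqrt n))) ∧
    (∃ C' : ℝ, ∀ᶠ n in atTop,
      (∫ ω, |if s n ≤ phat n ω then PZ (t n) / phat n ω else 0| ^ m ∂μ)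
          ^ (1 / m) ≤ C') := by
  have hm0 : (0:ℝ) < m := lt_of_lt_of_le two_pos hm
  set ℓ : ℕ := ⌈m⌉₊ with hℓdef
  set k : ℕ := 2 * ℓ with hkdef
  have hℓ2 : 2 ≤ ℓ := by
    have h1 := Nat.ceil_le_ceil (R := ℝ) hm
    simpa using h1
  have hℓ0 : 0 < ℓ := by omega
  have hk0 : 0 < k := by omega
  have hkR0 : (0:ℝ) < (k:ℝ) := by exact_mod_cast hk0
  have hkne : ((k:ℝ)) ≠ 0 := ne_of_gt hkR0
  have hmk : m < k := by
    have h1 : m ≤ (ℓ:ℝ) := Nat.le_ceil m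
    have h2 : (ℓ:ℝ) < (k:ℝ) := by
      rw [hkdef]; push_cast; have : (0:ℝ) < ℓ := by exact_mod_cast hℓ0
      linarith
    linarith
  set K1 : ℝ := ((ℓ:ℝ)+1) * (ℓ:ℝ)^(2*ℓ) with hK1def
  set K2 : ℝ := ((k:ℝ)+1) * (k:ℝ)^(2*k) with hK2def
  have hK1pos : 0 < K1 := by positivity
  have hK2pos : 0 < K2 := by positivity
  set C : ℝ := 4 * K1 ^ (1/(k:ℝ)) with hCdef
  set D : ℝ := 2^k + 2^k * 2^k * K2 with hDdef
  have hDpos : 0 < D := by positivity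
  set C' : ℝ := D ^ (1/(k:ℝ)) with hC'def
  -- the main pointwise-in-n estimate
  have main : ∀ n : ℕ, 1 ≤ n → s n < PZ (t n) / 2 →
      ((∫ ω, |(if s n ≤ phat n ω then PZ (t n) / phat n ω else 0) - 1| ^ m ∂μ)
          ^ (1 / m) ≤
        C * (1 / (s n * Real.sqrt n) + 1 / (PZ (t n) * Real.sqrt n))) ∧
      ((∫ ω, |if s n ≤ phat n ω then PZ (t n) / phat n ω else 0| ^ m ∂μ)
          ^ (1 / m) ≤ C') := by
    intro n hn1 hns
    have hn0R : (0:ℝ) < n := by exact_mod_cast hn1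
    have hn1R : (1:ℝ) ≤ n := by exact_mod_cast hn1
    have hnne : (n:ℝ) ≠ 0 := ne_of_gt hn0R
    set p : ℝ := PZ (t n) with hpdef
    have hsn : 0 < s n := hs n
    have hp0 : 0 < p := by linarith
    have hp1 : p ≤ 1 := by
      rw [hpdef, hPZ]
      have h1 : μ {ω | t n ≤ Z 0 ω} ≤ 1 := prob_le_one
      have := ENNReal.toReal_mono (by norm_num) h1
      simpa using this
    set X : Ω → ℝ := phat n with hXdef
    set b : ℕ → Ω → ℝ := fun i ω => if t n ≤ Z i ω then (1:ℝ) else 0 with hbdef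
    have hb_meas : ∀ i, Measurable (b i) := by
      intro i
      exact Measurable.ite ((hZm i) measurableSet_Ici) measurable_const measurable_const
    have hb01 : ∀ i ω, b i ω = 0 ∨ b i ω = 1 := by
      intro i ω; by_cases h : t n ≤ Z i ω <;> simp [hbdef, h]
    have hXmeas : Measurable X := by
      have : X = fun ω => (1 / (n : ℝ)) * ∑ i ∈ Finset.range n, b i ω :=
        funext (fun ω => hphat n ω)
      rw [this]
      exact measurable_const.mul (Finset.measurable_sum _ (fun i _ => hb_meas i))
    have hint_b : ∀ i, ∫ ω, b i ω ∂μ = p := by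
      intro i
      have hms : MeasurableSet {ω | t n ≤ Z i ω} := (hZm i) measurableSet_Ici
      have h1 : ∫ ω, b i ω ∂μ
          = ∫ ω, Set.indicator {ω' | t n ≤ Z i ω'} (fun _ => (1:ℝ)) ω ∂μ := by
        refine integral_congr_ae (Filter.Eventually.of_forall fun ω => ?_)
        rw [Set.indicator_apply]; rfl
      rw [h1, integral_indicator_const (1:ℝ) hms, smul_eq_mul, mul_one]
      have h2 : μ {ω | t n ≤ Z i ω} = μ {ω | t n ≤ Z 0 ω} :=
        (hident i).measure_mem_eq (s := Set.Ici (t n)) measurableSet_Ici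
      rw [measureReal_def, h2, hpdef, hPZ]
    set ξ : ℕ → Ω → ℝ := fun i ω => b i ω - p with hξdef
    have hξmeas : ∀ i, Measurable (ξ i) := fun i => (hb_meas i).sub measurable_const
    have hξbdd : ∀ i ω, |ξ i ω| ≤ 1 := by
      intro i ω
      rcases hb01 i ω with h | h <;>
        · simp only [hξdef, h]
          rw [abs_le]; constructor <;> linarith
    have hξint : ∀ i, Integrable (ξ i) μ := fun i => intble_of_bdd (hξmeas i) (hξbdd i)
    have hξmean : ∀ i, ∫ ω, ξ i ω ∂μ = 0 := by
      intro i
      have : Integrable (b i) μ := intble_of_bdd (hb_meas i)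
        (C := 1) (fun ω => by rcases hb01 i ω with h | h <;> simp [h])
      rw [hξdef]
      simp only
      rw [integral_sub this (integrable_const p), hint_b i, integral_const]
      simp
    have hξvar : ∀ i, ∫ ω, (ξ i ω)^2 ∂μ ≤ p := by
      intro i
      have hptw : ∀ ω, (ξ i ω)^2 = b i ω * (1 - 2*p) + p^2 := by
        intro ω
        rcases hb01 i ω with h | h <;> simp only [hξdef] <;> rw [h] <;> ring
      have hintb : Integrable (b i) μ := intble_of_bdd (hb_meas i)
        (C := 1) (fun ω => by rcases hb01 i ω with h | h <;> simp [h])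
      calc ∫ ω, (ξ i ω)^2 ∂μ = ∫ ω, (b i ω * (1 - 2*p) + p^2) ∂μ :=
            integral_congr_ae (Filter.Eventually.of_forall hptw)
        _ = (∫ ω, b i ω ∂μ) * (1 - 2*p) + p^2 := by
            rw [integral_add (hintb.mul_const _) (integrable_const _),
              integral_mul_const, integral_const]
            simp
        _ = p * (1 - 2*p) + p^2 := by rw [hint_b i]
        _ ≤ p := by nlinarith
    have hξind : iIndepFun ξ μ := by
      have := hiid.comp (fun _ (x : ℝ) => (if t n ≤ x then (1:ℝ) else 0) - p)
        (fun _ => (Measurable.ite measurableSet_Ici measurable_const measurable_const).sub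
          measurable_const)
      exact this
    have hXsub : ∀ ω, X ω - p = (1/(n:ℝ)) * ∑ i ∈ Finset.range n, ξ i ω := by
      intro ω
      rw [hXdef, hphat n ω]
      simp only [hξdef]
      rw [Finset.sum_sub_distrib, Finset.sum_const, Finset.card_range, nsmul_eq_mul]
      field_simp
      rfl
    have hX01 : ∀ ω, 0 ≤ X ω ∧ X ω ≤ 1 := by
      intro ω
      rw [hXdef, hphat n ω]
      constructor
      · refine mul_nonneg (by positivity) (Finset.sum_nonneg fun i _ => ?_)
        split <;> norm_num
      · have hsum : ∑ i ∈ Finset.range n, (if t n ≤ Z i ω then (1:ℝ) else 0) ≤ n := by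
          calc ∑ i ∈ Finset.range n, (if t n ≤ Z i ω then (1:ℝ) else 0)
              ≤ ∑ i ∈ Finset.range n, (1:ℝ) := by
                refine Finset.sum_le_sum fun i _ => ?_
                split <;> norm_num
            _ = n := by simp
        calc (1 / (n : ℝ)) * ∑ i ∈ Finset.range n, (if t n ≤ Z i ω then (1:ℝ) else 0)
            ≤ (1 / (n : ℝ)) * n := by
              refine mul_le_mul_of_nonneg_left hsum (by positivity)
          _ = 1 := by field_simp
    have habsXp : ∀ ω, |X ω - p| ≤ 1 := by
      intro ω
      obtain ⟨h1, h2⟩ := hX01 ω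
      rw [abs_le]; constructor <;> linarith
    -- lower bound on X when positive
    have hX1n : ∀ ω, s n ≤ X ω → 1/(n:ℝ) ≤ X ω := by
      intro ω hω
      have hXn : X ω = (((Finset.range n).filter (fun i => t n ≤ Z i ω)).card : ℝ) / n := by
        rw [hXdef, hphat n ω, ← Finset.sum_boole]
        ring
      have hX0 : 0 < X ω := lt_of_lt_of_le hsn hω
      have hcard : (1:ℝ) ≤ (((Finset.range n).filter (fun i => t n ≤ Z i ω)).card : ℝ) := by
        have h0 : (0:ℝ) < (((Finset.range n).filter (fun i => t n ≤ Z i ω)).card : ℝ) := by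
          by_contra h
          push_neg at h
          have : (((Finset.range n).filter (fun i => t n ≤ Z i ω)).card : ℝ) = 0 := by
            have : (0:ℝ) ≤ _ := Nat.cast_nonneg ((Finset.range n).filter
              (fun i => t n ≤ Z i ω)).card
            linarith
          rw [hXn, this] at hX0
          simp at hX0
        have : 0 < ((Finset.range n).filter (fun i => t n ≤ Z i ω)).card := by
          exact_mod_cast h0
        exact_mod_cast this
      rw [hXn]
      gcongr
    have hSmeas : Measurable (fun ω => ∑ i ∈ Finset.range n, ξ i ω) :=
      Finset.measurable_sum _ (fun i _ => hξmeas i)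
    have hSbdd : ∀ ω, |∑ i ∈ Finset.range n, ξ i ω| ≤ (n:ℝ) := by
      intro ω
      calc |∑ i ∈ Finset.range n, ξ i ω| ≤ ∑ i ∈ Finset.range n, |ξ i ω| :=
            Finset.abs_sum_le_sum_abs _ _
        _ ≤ ∑ i ∈ Finset.range n, 1 := Finset.sum_le_sum (fun i _ => hξbdd i ω)
        _ = n := by simp
    have habsXpmeas : Measurable (fun ω => |X ω - p|) := (hXmeas.sub measurable_const).abs
    have hev : Even k := ⟨ℓ, by omega⟩
    have hrwX : ∀ ω, |X ω - p| ^ k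
        = ((1:ℝ)/n)^k * (∑ i ∈ Finset.range n, ξ i ω)^k := by
      intro ω
      rw [hev.pow_abs, hXsub ω, mul_pow]
    have hintXk : ∫ ω, |X ω - p| ^ k ∂μ
        = ((1:ℝ)/n)^k * ∫ ω, (∑ i ∈ Finset.range n, ξ i ω)^k ∂μ := by
      rw [← integral_const_mul]
      exact integral_congr_ae (Filter.Eventually.of_forall hrwX)
    have hM1 : ∫ ω, |X ω - p| ^ k ∂μ ≤ K1 * ((1:ℝ)/n)^ℓ := by
      have hmom := moment_bound (μ := μ) n ℓ ξ hξind hξmeas hξbdd hξmean p hp0.le hξvar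
      rw [← hkdef] at hmom
      have hsumb : ∑ j ∈ Finset.range (ℓ+1), (n.choose j : ℝ) * (j:ℝ)^k * p^j
          ≤ ((ℓ:ℝ)+1) * ((ℓ:ℝ)^(2*ℓ) * (n:ℝ)^ℓ) := by
        have hbound : ∀ j ∈ Finset.range (ℓ+1),
            (n.choose j : ℝ) * (j:ℝ)^k * p^j ≤ (ℓ:ℝ)^(2*ℓ) * (n:ℝ)^ℓ := by
          intro j hj
          have hjl : j ≤ ℓ := by
            have := Finset.mem_range.1 hj; omega
          have h1 : (n.choose j : ℝ) ≤ (n:ℝ)^ℓ := by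
            calc (n.choose j : ℝ) ≤ ((n^j : ℕ) : ℝ) := by
                  exact_mod_cast Nat.choose_le_pow n j
              _ = (n:ℝ)^j := by push_cast; rfl
              _ ≤ (n:ℝ)^ℓ := pow_le_pow_right₀ hn1R hjl
          have h2 : (j:ℝ)^k ≤ (ℓ:ℝ)^(2*ℓ) := by
            rw [hkdef]
            refine pow_le_pow_left₀ (by positivity) ?_ _
            exact_mod_cast hjl
          have h3 : p^j ≤ 1 := pow_le_one₀ hp0.le hp1
          calc (n.choose j : ℝ) * (j:ℝ)^k * p^j
              ≤ (n:ℝ)^ℓ * (ℓ:ℝ)^(2*ℓ) * 1 := by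
                refine mul_le_mul (mul_le_mul h1 h2 (by positivity) (by positivity)) h3
                  (by positivity) (by positivity)
            _ = (ℓ:ℝ)^(2*ℓ) * (n:ℝ)^ℓ := by ring
        calc ∑ j ∈ Finset.range (ℓ+1), (n.choose j : ℝ) * (j:ℝ)^k * p^j
            ≤ ∑ _j ∈ Finset.range (ℓ+1), (ℓ:ℝ)^(2*ℓ) * (n:ℝ)^ℓ :=
              Finset.sum_le_sum hbound
          _ = ((ℓ:ℝ)+1) * ((ℓ:ℝ)^(2*ℓ) * (n:ℝ)^ℓ) := by
              rw [Finset.sum_const, Finset.card_range, nsmul_eq_mul]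
              push_cast; ring
      rw [hintXk]
      calc ((1:ℝ)/n)^k * ∫ ω, (∑ i ∈ Finset.range n, ξ i ω)^k ∂μ
          ≤ ((1:ℝ)/n)^k * (((ℓ:ℝ)+1) * ((ℓ:ℝ)^(2*ℓ) * (n:ℝ)^ℓ)) :=
            mul_le_mul_of_nonneg_left (le_trans hmom hsumb) (by positivity)
        _ = K1 * ((1:ℝ)/n)^ℓ := by
            rw [hK1def, hkdef, two_mul ℓ, pow_add, div_pow]
            simp only [one_pow]
            have hnl : ((n:ℝ))^ℓ ≠ 0 := by positivity
            field_simp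
    -- PART 1
    set val : Ω → ℝ := fun ω => if s n ≤ X ω then p / X ω else 0 with hvaldef
    have hvalmeas : Measurable val :=
      Measurable.ite (hXmeas measurableSet_Ici) (measurable_const.div hXmeas) measurable_const
    have hval_range : ∀ ω, 0 ≤ val ω ∧ val ω ≤ p / s n := by
      intro ω
      simp only [hvaldef]
      by_cases h : s n ≤ X ω
      · rw [if_pos h]
        have hX0 : 0 < X ω := lt_of_lt_of_le hsn h
        refine ⟨div_nonneg hp0.le hX0.le, ?_⟩
        gcongr
      · rw [if_neg h]
        exact ⟨le_refl 0, by positivity⟩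
    set Y : Ω → ℝ := fun ω => |val ω - 1| with hYdef
    have hYmeas : Measurable Y := (hvalmeas.sub measurable_const).abs
    have hY0 : ∀ ω, 0 ≤ Y ω := fun ω => abs_nonneg _
    have hYB : ∀ ω, Y ω ≤ p / s n + 1 := by
      intro ω
      obtain ⟨h1, h2⟩ := hval_range ω
      have hps : (0:ℝ) ≤ p / s n := by positivity
      show |val ω - 1| ≤ p / s n + 1
      rw [abs_le]
      constructor <;> linarith
    have hYpt : ∀ ω, Y ω ^ k ≤ ((1/s n)^k + (2/p)^k) * |X ω - p| ^ k := by
      intro ω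
      have hA0 : (0:ℝ) ≤ |X ω - p| ^ k := by positivity
      by_cases h : s n ≤ X ω
      · have hX0 : 0 < X ω := lt_of_lt_of_le hsn h
        have hY_eq : Y ω = |X ω - p| / X ω := by
          show |val ω - 1| = _
          have hv : val ω = p / X ω := by simp only [hvaldef]; exact if_pos h
          rw [hv, div_sub_one (ne_of_gt hX0), abs_div, abs_of_pos hX0, abs_sub_comm]
        have hY_le : Y ω ≤ |X ω - p| / s n := by
          rw [hY_eq]
          gcongr
        calc Y ω ^ k ≤ (|X ω - p| / s n) ^ k := pow_le_pow_left₀ (hY0 ω) hY_le k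
          _ = (1/s n)^k * |X ω - p| ^ k := by
              rw [div_pow, one_div, inv_pow, div_eq_mul_inv, mul_comm]
          _ ≤ ((1/s n)^k + (2/p)^k) * |X ω - p| ^ k := by
              refine mul_le_mul_of_nonneg_right ?_ hA0
              have : (0:ℝ) ≤ (2/p)^k := by positivity
              linarith
      · have hY_eq : Y ω = 1 := by
          show |val ω - 1| = 1
          have hv : val ω = 0 := by simp only [hvaldef]; exact if_neg h
          rw [hv]
          norm_num
        push_neg at h
        have hdist : p/2 ≤ |X ω - p| := by
          calc p/2 ≤ p - X ω := by linarith
            _ ≤ |p - X ω| := le_abs_self _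
            _ = |X ω - p| := abs_sub_comm p (X ω)
        have h1le : (1:ℝ) ≤ 2/p * |X ω - p| := by
          rw [div_mul_eq_mul_div, le_div_iff₀ hp0]
          linarith
        calc Y ω ^ k = 1 := by rw [hY_eq, one_pow]
          _ ≤ (2/p * |X ω - p|)^k := one_le_pow₀ h1le
          _ = (2/p)^k * |X ω - p|^k := mul_pow _ _ _
          _ ≤ ((1/s n)^k + (2/p)^k) * |X ω - p| ^ k := by
              refine mul_le_mul_of_nonneg_right ?_ hA0
              have : (0:ℝ) ≤ (1/s n)^k := by positivity
              linarith
    have hYint : Integrable (fun ω => Y ω ^ k) μ := intble_of_bdd (hYmeas.pow_const k)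
      (C := (p / s n + 1)^k) (fun ω => by
        rw [abs_pow, abs_of_nonneg (hY0 ω)]
        exact pow_le_pow_left₀ (hY0 ω) (hYB ω) k)
    have hXkint : Integrable (fun ω => |X ω - p| ^ k) μ := intble_of_bdd
      (habsXpmeas.pow_const k) (C := 1) (fun ω => by
        rw [abs_pow, abs_abs]
        exact pow_le_one₀ (abs_nonneg _) (habsXp ω))
    have hIY : ∫ ω, Y ω ^ k ∂μ ≤ ((1/s n)^k + (2/p)^k) * (K1 * ((1:ℝ)/n)^ℓ) := by
      calc ∫ ω, Y ω ^ k ∂μ ≤ ∫ ω, ((1/s n)^k + (2/p)^k) * |X ω - p| ^ k ∂μ :=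
            integral_mono hYint (hXkint.const_mul _) hYpt
        _ = ((1/s n)^k + (2/p)^k) * ∫ ω, |X ω - p| ^ k ∂μ := integral_const_mul _ _
        _ ≤ _ := mul_le_mul_of_nonneg_left hM1 (by positivity)
    have hlyap := lyapunov (μ := μ) Y hYmeas hY0 (B := p / s n + 1) (by positivity) hYB hm0 hmk
    have hsqrtn : 0 < Real.sqrt n := Real.sqrt_pos.2 hn0R
    have part1 : (∫ ω, Y ω ^ m ∂μ) ^ (1/m)
        ≤ C * (1 / (s n * Real.sqrt n) + 1 / (p * Real.sqrt n)) := by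
      have h1 : (∫ ω, Y ω ^ k ∂μ) ^ (1/(k:ℝ))
          ≤ (((1/s n)^k + (2/p)^k) * (K1 * ((1:ℝ)/n)^ℓ)) ^ (1/(k:ℝ)) :=
        Real.rpow_le_rpow (integral_nonneg fun ω => by positivity) hIY (by positivity)
      have h2 : (((1/s n)^k + (2/p)^k) * (K1 * ((1:ℝ)/n)^ℓ)) ^ (1/(k:ℝ))
          = ((1/s n)^k + (2/p)^k) ^ (1/(k:ℝ))
            * (K1 ^ (1/(k:ℝ)) * (((1:ℝ)/n)^ℓ) ^ (1/(k:ℝ))) := by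
        rw [Real.mul_rpow (by positivity) (by positivity),
          Real.mul_rpow (by positivity) (by positivity)]
      have h3 : ((((1:ℝ)/n)^ℓ : ℝ)) ^ (1/(k:ℝ)) = 1 / Real.sqrt n := by
        rw [← Real.rpow_natCast ((1:ℝ)/n) ℓ, ← Real.rpow_mul (by positivity)]
        have hlk : (ℓ:ℝ) * (1/(k:ℝ)) = (1:ℝ)/2 := by
          rw [hkdef]
          have hl0 : (ℓ:ℝ) ≠ 0 := by positivity
          push_cast
          field_simp
        rw [hlk, ← Real.sqrt_eq_rpow, one_div, Real.sqrt_inv, ← one_div]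
      have h4 : ((1/s n)^k + (2/p)^k) ^ (1/(k:ℝ)) ≤ 2 * (1/s n + 2/p) := by
        have ha : (0:ℝ) ≤ 1/s n := by positivity
        have hb : (0:ℝ) ≤ 2/p := by positivity
        have hs1 : (1/s n)^k + (2/p)^k ≤ 2 * (1/s n + 2/p)^k := by
          have h5 : (1/s n)^k ≤ (1/s n + 2/p)^k := pow_le_pow_left₀ ha (by linarith) k
          have h6 : (2/p)^k ≤ (1/s n + 2/p)^k := pow_le_pow_left₀ hb (by linarith) k
          linarith
        calc ((1/s n)^k + (2/p)^k) ^ (1/(k:ℝ))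
            ≤ (2 * (1/s n + 2/p)^k) ^ (1/(k:ℝ)) :=
              Real.rpow_le_rpow (by positivity) hs1 (by positivity)
          _ = 2 ^ (1/(k:ℝ)) * ((1/s n + 2/p)^k) ^ (1/(k:ℝ)) :=
              Real.mul_rpow (by norm_num) (by positivity)
          _ ≤ 2 * (1/s n + 2/p) := by
              have h7 : (((1/s n + 2/p)^k : ℝ)) ^ (1/(k:ℝ)) = 1/s n + 2/p := by
                have hbase : (0:ℝ) ≤ 1/s n + 2/p := by positivity
                rw [← Real.rpow_natCast (1/s n + 2/p) k, ← Real.rpow_mul hbase,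
                  mul_one_div, div_self hkne, Real.rpow_one]
              rw [h7]
              refine mul_le_mul_of_nonneg_right ?_ (by positivity)
              calc (2:ℝ) ^ (1/(k:ℝ)) ≤ 2 ^ (1:ℝ) :=
                    Real.rpow_le_rpow_of_exponent_le one_le_two (by
                      rw [div_le_one hkR0]
                      exact_mod_cast hk0)
                _ = 2 := Real.rpow_one 2
      calc (∫ ω, Y ω ^ m ∂μ) ^ (1/m) ≤ (∫ ω, Y ω ^ k ∂μ) ^ (1/(k:ℝ)) := hlyap
        _ ≤ (((1/s n)^k + (2/p)^k) * (K1 * ((1:ℝ)/n)^ℓ)) ^ (1/(k:ℝ)) := h1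
        _ = ((1/s n)^k + (2/p)^k) ^ (1/(k:ℝ)) * (K1 ^ (1/(k:ℝ)) * (1/Real.sqrt n)) := by
            rw [h2, h3]
        _ ≤ (2 * (1/s n + 2/p)) * (K1 ^ (1/(k:ℝ)) * (1/Real.sqrt n)) :=
            mul_le_mul_of_nonneg_right h4 (by positivity)
        _ ≤ C * (1 / (s n * Real.sqrt n) + 1 / (p * Real.sqrt n)) := by
            rw [hCdef]
            have e1 : (2 * (1/s n + 2/p)) * (K1 ^ (1/(k:ℝ)) * (1/Real.sqrt n))
                = K1 ^ (1/(k:ℝ))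
                  * (2 * (1/(s n * Real.sqrt n)) + 4 * (1/(p * Real.sqrt n))) := by
              field_simp
              ring
            rw [e1]
            have h8 : (2:ℝ) * (1/(s n * Real.sqrt n)) + 4 * (1/(p * Real.sqrt n))
                ≤ 4 * (1/(s n * Real.sqrt n) + 1/(p * Real.sqrt n)) := by
              have : (0:ℝ) ≤ 1/(s n * Real.sqrt n) := by positivity
              linarith
            calc K1 ^ (1/(k:ℝ)) * (2 * (1/(s n * Real.sqrt n)) + 4 * (1/(p * Real.sqrt n)))
                ≤ K1 ^ (1/(k:ℝ)) * (4 * (1/(s n * Real.sqrt n) + 1/(p * Real.sqrt n))) :=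
                  mul_le_mul_of_nonneg_left h8 (by positivity)
              _ = 4 * K1 ^ (1/(k:ℝ)) * (1/(s n * Real.sqrt n) + 1/(p * Real.sqrt n)) := by
                  ring
    -- PART 2
    have hvalabs : ∀ ω, |val ω| = val ω := fun ω => abs_of_nonneg (hval_range ω).1
    have hlyap2 := lyapunov (μ := μ) (fun ω => |val ω|) hvalmeas.abs
      (fun ω => abs_nonneg _) (B := p / s n) (by positivity)
      (fun ω => le_of_eq_of_le (hvalabs ω) (hval_range ω).2) hm0 hmk
    have hvalk : ∫ ω, |val ω| ^ k ∂μ ≤ D := by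
      by_cases hcase : p ≤ 2/(n:ℝ)
      · have hval2 : ∀ ω, |val ω| ≤ 2 := by
          intro ω
          rw [hvalabs ω]
          simp only [hvaldef]
          by_cases h : s n ≤ X ω
          · rw [if_pos h]
            have h1n : 1/(n:ℝ) ≤ X ω := hX1n ω h
            calc p / X ω ≤ p / (1/(n:ℝ)) := by
                  gcongr
              _ = p * n := by field_simp
              _ ≤ (2/(n:ℝ)) * n := mul_le_mul_of_nonneg_right hcase hn0R.le
              _ = 2 := by field_simp
          · rw [if_neg h]; norm_num
        calc ∫ ω, |val ω| ^ k ∂μ ≤ ∫ ω, (2:ℝ)^k ∂μ := by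
              refine integral_mono ?_ (integrable_const _) ?_
              · exact intble_of_bdd (hvalmeas.abs.pow_const k) (C := 2^k) (fun ω => by
                  rw [abs_pow, abs_abs]
                  exact pow_le_pow_left₀ (abs_nonneg _) (hval2 ω) k)
              · intro ω
                exact pow_le_pow_left₀ (abs_nonneg _) (hval2 ω) k
          _ = 2^k := by simp
          _ ≤ D := by
              have h9 : (0:ℝ) ≤ 2^k * 2^k * K2 := by positivity
              rw [hDdef]
              linarith
      · push_neg at hcase
        have hnp1 : (1:ℝ) ≤ p * n := by
          rw [div_lt_iff₀ hn0R] at hcase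
          linarith
        have hM2 : ∫ ω, |X ω - p| ^ (2*k) ∂μ ≤ K2 * (p/(n:ℝ))^k := by
          have hmom := moment_bound (μ := μ) n k ξ hξind hξmeas hξbdd hξmean p hp0.le hξvar
          have hsumb : ∑ j ∈ Finset.range (k+1), (n.choose j : ℝ) * (j:ℝ)^(2*k) * p^j
              ≤ ((k:ℝ)+1) * ((k:ℝ)^(2*k) * (p*n)^k) := by
            have hbound : ∀ j ∈ Finset.range (k+1),
                (n.choose j : ℝ) * (j:ℝ)^(2*k) * p^j ≤ (k:ℝ)^(2*k) * (p*n)^k := by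
              intro j hj
              have hjk : j ≤ k := by
                have := Finset.mem_range.1 hj; omega
              have h1 : (n.choose j : ℝ) ≤ (n:ℝ)^j := by
                calc (n.choose j : ℝ) ≤ ((n^j : ℕ) : ℝ) := by
                      exact_mod_cast Nat.choose_le_pow n j
                  _ = (n:ℝ)^j := by push_cast; rfl
              have h2 : (j:ℝ)^(2*k) ≤ (k:ℝ)^(2*k) := by
                refine pow_le_pow_left₀ (by positivity) ?_ _
                exact_mod_cast hjk
              have h3 : (p*n)^j ≤ (p*n)^k := pow_le_pow_right₀ hnp1 hjk
              calc (n.choose j : ℝ) * (j:ℝ)^(2*k) * p^j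
                  ≤ (n:ℝ)^j * (k:ℝ)^(2*k) * p^j := by
                    refine mul_le_mul_of_nonneg_right
                      (mul_le_mul h1 h2 (by positivity) (by positivity)) (by positivity)
                _ = (k:ℝ)^(2*k) * (p*n)^j := by rw [mul_pow]; ring
                _ ≤ (k:ℝ)^(2*k) * (p*n)^k := mul_le_mul_of_nonneg_left h3 (by positivity)
            calc ∑ j ∈ Finset.range (k+1), (n.choose j : ℝ) * (j:ℝ)^(2*k) * p^j
                ≤ ∑ _j ∈ Finset.range (k+1), (k:ℝ)^(2*k) * (p*n)^k :=
                  Finset.sum_le_sum hbound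
              _ = ((k:ℝ)+1) * ((k:ℝ)^(2*k) * (p*n)^k) := by
                  rw [Finset.sum_const, Finset.card_range, nsmul_eq_mul]
                  push_cast; ring
          have hrwX2 : ∀ ω, |X ω - p| ^ (2*k)
              = ((1:ℝ)/n)^(2*k) * (∑ i ∈ Finset.range n, ξ i ω)^(2*k) := by
            intro ω
            have hev2 : Even (2*k) := even_two_mul k
            rw [hev2.pow_abs, hXsub ω, mul_pow]
          calc ∫ ω, |X ω - p| ^ (2*k) ∂μ
              = ((1:ℝ)/n)^(2*k) * ∫ ω, (∑ i ∈ Finset.range n, ξ i ω)^(2*k) ∂μ := by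
                rw [← integral_const_mul]
                exact integral_congr_ae (Filter.Eventually.of_forall hrwX2)
            _ ≤ ((1:ℝ)/n)^(2*k) * (((k:ℝ)+1) * ((k:ℝ)^(2*k) * (p*n)^k)) :=
                mul_le_mul_of_nonneg_left (le_trans hmom hsumb) (by positivity)
            _ = K2 * (p/(n:ℝ))^k := by
                rw [hK2def, two_mul k, pow_add, div_pow, div_pow, mul_pow]
                simp only [one_pow]
                have hnk : ((n:ℝ))^k ≠ 0 := by positivity
                field_simp
        have h2pt : ∀ ω, |val ω| ^ k
            ≤ 2^k + (p*n)^k * ((2/p)^(2*k) * |X ω - p|^(2*k)) := by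
          intro ω
          have hterm0 : (0:ℝ) ≤ (p*n)^k * ((2/p)^(2*k) * |X ω - p|^(2*k)) := by positivity
          rw [hvalabs ω]
          simp only [hvaldef]
          by_cases h : s n ≤ X ω
          · rw [if_pos h]
            by_cases h2 : p/2 ≤ X ω
            · have hX0 : (0:ℝ) < X ω := lt_of_lt_of_le (by positivity) h2
              have hle2 : p / X ω ≤ 2 := by
                rw [div_le_iff₀ hX0]
                linarith
              calc (p / X ω)^k ≤ 2^k :=
                    pow_le_pow_left₀ (div_nonneg hp0.le hX0.le) hle2 k
                _ ≤ _ := le_add_of_nonneg_right hterm0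
            · push_neg at h2
              have h1n : 1/(n:ℝ) ≤ X ω := hX1n ω h
              have hX0 : (0:ℝ) < X ω := lt_of_lt_of_le (by positivity) h1n
              have hvn : p / X ω ≤ p * n := by
                calc p / X ω ≤ p / (1/(n:ℝ)) := by
                      gcongr
                  _ = p * n := by field_simp
              have hdist : p/2 ≤ |X ω - p| := by
                calc p/2 ≤ p - X ω := by linarith
                  _ ≤ |p - X ω| := le_abs_self _
                  _ = |X ω - p| := abs_sub_comm p (X ω)
              have h1le : (1:ℝ) ≤ 2/p * |X ω - p| := by
                rw [div_mul_eq_mul_div, le_div_iff₀ hp0]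
                linarith
              have hone : (1:ℝ) ≤ (2/p)^(2*k) * |X ω - p|^(2*k) := by
                calc (1:ℝ) ≤ (2/p * |X ω - p|)^(2*k) := one_le_pow₀ h1le
                  _ = (2/p)^(2*k) * |X ω - p|^(2*k) := mul_pow _ _ _
              calc (p / X ω)^k ≤ (p*n)^k :=
                    pow_le_pow_left₀ (div_nonneg hp0.le hX0.le) hvn k
                _ = (p*n)^k * 1 := (mul_one _).symm
                _ ≤ (p*n)^k * ((2/p)^(2*k) * |X ω - p|^(2*k)) :=
                    mul_le_mul_of_nonneg_left hone (by positivity)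
                _ ≤ _ := le_add_of_nonneg_left (by positivity)
          · rw [if_neg h]
            have hzk : (0:ℝ)^k = 0 := zero_pow (by omega)
            rw [hzk]
            positivity
        have hX2kint : Integrable (fun ω => |X ω - p| ^ (2*k)) μ := intble_of_bdd
          (habsXpmeas.pow_const _) (C := 1) (fun ω => by
            rw [abs_pow, abs_abs]
            exact pow_le_one₀ (abs_nonneg _) (habsXp ω))
        calc ∫ ω, |val ω| ^ k ∂μ
            ≤ ∫ ω, (2^k + (p*n)^k * ((2/p)^(2*k) * |X ω - p|^(2*k))) ∂μ := by
              refine integral_mono ?_ ?_ h2pt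
              · exact intble_of_bdd (hvalmeas.abs.pow_const k) (C := (p/s n)^k) (fun ω => by
                  rw [abs_pow, abs_abs]
                  refine pow_le_pow_left₀ (abs_nonneg _) ?_ k
                  rw [hvalabs ω]
                  exact (hval_range ω).2)
              · exact (integrable_const _).add ((hX2kint.const_mul _).const_mul _)
          _ = 2^k + (p*n)^k * ((2/p)^(2*k) * ∫ ω, |X ω - p|^(2*k) ∂μ) := by
              have hsplit : ∫ ω, (p*n)^k * ((2/p)^(2*k) * |X ω - p|^(2*k)) ∂μ
                  = (p*n)^k * ((2/p)^(2*k) * ∫ ω, |X ω - p|^(2*k) ∂μ) := by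
                rw [integral_const_mul, integral_const_mul]
              rw [integral_add (integrable_const _) ((hX2kint.const_mul _).const_mul _),
                integral_const, hsplit]
              simp
          _ ≤ 2^k + (p*n)^k * ((2/p)^(2*k) * (K2 * (p/(n:ℝ))^k)) := by
              refine add_le_add_right (mul_le_mul_of_nonneg_left
                (mul_le_mul_of_nonneg_left hM2 (by positivity)) (by positivity)) _
          _ = D := by
              rw [hDdef, two_mul k, pow_add, div_pow, div_pow, mul_pow]
              have hpk : (p:ℝ)^k ≠ 0 := by positivity
              have hnk : ((n:ℝ))^k ≠ 0 := by positivity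
              field_simp
    have part2 : (∫ ω, |val ω| ^ m ∂μ) ^ (1/m) ≤ C' := by
      calc (∫ ω, |val ω| ^ m ∂μ) ^ (1/m)
          ≤ (∫ ω, |val ω| ^ k ∂μ) ^ (1/(k:ℝ)) := hlyap2
        _ ≤ D ^ (1/(k:ℝ)) :=
            Real.rpow_le_rpow (integral_nonneg fun ω => by positivity) hvalk (by positivity)
        _ = C' := hC'def.symm
    exact ⟨part1, part2⟩
  constructor
  · exact ⟨C, by filter_upwards [hts, eventually_ge_atTop 1] with n h1 h2
      using (main n h2 h1).1⟩
  · exact ⟨C', by filter_upwards [hts, eventually_ge_atTop 1] with n h1 h2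
      using (main n h2 h1).2⟩
end
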